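/- arXiv:2307.07304 — 10 statements merged into one kernel-verified Lean document; each statement's English description precedes it below -/
import Mathlib

section
/- Let v be an additive valuation on a finite set M of goods, let n ≥ 2 be an integer, and let S ⊆ M be a set of goods with |S| ≤ 2 and v(S) ≤ MMS^n_v(M). Then MMS^{n−1}_v(M ∖ S) ≥ MMS^n_v(M). -/
open Finset

/-- `P` is a partition of the finite set `S` of goods into `d` (possibly empty) bundles. -/
def IsPartition {d : ℕ} (P : Fin d → Finset ℕ) (S : Finset ℕ) : Prop :=
  (∀ i j : Fin d, i ≠ j → Disjoint (P i) (P j)) ∧ Finset.univ.biUnion P = S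

/-- The maximin share `MMS^d_v(S)`: the maximum, over all partitions of `S` into `d`
(possibly empty) bundles, of the minimum bundle value under the additive valuation `v`. -/
noncomputable def MMS (v : ℕ → ℝ) (d : ℕ) (S : Finset ℕ) : ℝ :=
  sSup {x : ℝ | ∃ P : Fin d → Finset ℕ, IsPartition P S ∧ x = ⨅ j, (P j).sum v}

lemma mmsSet_finite (v : ℕ → ℝ) (d : ℕ) (S : Finset ℕ) :
    {x : ℝ | ∃ P : Fin d → Finset ℕ, IsPartition P S ∧ x = ⨅ j, (P j).sum v}.Finite := by
  apply Set.Finite.subset (Set.Finite.image (f := fun P : Fin d → Finset ℕ => ⨅ j, (P j).sum v)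
    (Set.Finite.pi (fun _ : Fin d => S.powerset.finite_toSet)))
  rintro x ⟨P, hP, rfl⟩
  refine ⟨P, fun i _ => ?_, rfl⟩
  simp only [Finset.coe_powerset, Set.mem_preimage, Set.mem_powerset_iff, Finset.coe_subset]
  exact hP.2 ▸ Finset.subset_biUnion_of_mem P (Finset.mem_univ i)

lemma mmsSet_nonempty (v : ℕ → ℝ) (d : ℕ) (hd : 0 < d) (S : Finset ℕ) :
    {x : ℝ | ∃ P : Fin d → Finset ℕ, IsPartition P S ∧ x = ⨅ j, (P j).sum v}.Nonempty := by
  classical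
  set P : Fin d → Finset ℕ := fun k => if k = ⟨0, hd⟩ then S else ∅ with hPdef
  refine ⟨⨅ j, (P j).sum v, P, ⟨?_, ?_⟩, rfl⟩
  · intro i j hij
    by_cases hi : i = ⟨0, hd⟩
    · have hj : j ≠ ⟨0, hd⟩ := by rw [← hi]; exact hij.symm
      simp [hPdef, hi, hj]
    · simp [hPdef, hi]
  · ext g
    simp only [Finset.mem_biUnion, Finset.mem_univ, true_and, hPdef]
    constructor
    · rintro ⟨k, hk⟩
      split_ifs at hk with h
      · exact hk
      · exact absurd hk (Finset.notMem_empty g)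
    · intro hg
      exact ⟨⟨0, hd⟩, by simpa using hg⟩

/-- removing at most 2 goods of total value at most the MMS value,
together with one agent, does not decrease the MMS value. -/
theorem valid_reduction_two_goods
    (M : Finset ℕ) (v : ℕ → ℝ) (hnn : ∀ g ∈ M, 0 ≤ v g)
    (n : ℕ) (hn : 2 ≤ n)
    (S : Finset ℕ) (hSM : S ⊆ M) (hScard : S.card ≤ 2)
    (hSval : S.sum v ≤ MMS v n M) :
    MMS v n M ≤ MMS v (n - 1) (M \ S) := by
  classical
  obtain ⟨m, rfl⟩ : ∃ m, n = m + 2 := ⟨n - 2, by omega⟩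
  have hfin := mmsSet_finite v (m + 2) M
  have hne := mmsSet_nonempty v (m + 2) (by omega) M
  -- the supremum is attained
  have hmem : MMS v (m + 2) M ∈
      {x : ℝ | ∃ P : Fin (m + 2) → Finset ℕ, IsPartition P M ∧ x = ⨅ j, (P j).sum v} :=
    Set.Nonempty.csSup_mem hne hfin
  obtain ⟨P, hP, hval⟩ := hmem
  set μ := MMS v (m + 2) M with hμ
  -- each bundle has value at least μ
  have hbund : ∀ j : Fin (m + 2), μ ≤ (P j).sum v := by
    intro j
    rw [hval]
    exact ciInf_le (Set.Finite.bddBelow (Set.finite_range _)) j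
  have hPsub : ∀ j, P j ⊆ M := fun j => hP.2 ▸ Finset.subset_biUnion_of_mem P (Finset.mem_univ j)
  -- find two distinct bundles covering S
  have hcover : ∃ i0 j0 : Fin (m + 2), i0 ≠ j0 ∧ S ⊆ P i0 ∪ P j0 := by
    have hidx : ∀ g ∈ M, ∃ i, g ∈ P i := by
      intro g hg
      rw [← hP.2] at hg
      simpa using (Finset.mem_biUnion.mp hg)
    interval_cases h : S.card
    · refine ⟨0, 1, by simp [Fin.ext_iff], ?_⟩
      rw [Finset.card_eq_zero.mp h]
      exact Finset.empty_subset _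
    · obtain ⟨a, ha⟩ := Finset.card_eq_one.mp h
      obtain ⟨i, hi⟩ := hidx a (hSM (ha ▸ Finset.mem_singleton_self a))
      obtain ⟨j, hj⟩ := exists_ne i
      refine ⟨i, j, fun hh => hj hh.symm, ?_⟩
      rw [ha]
      intro g hg
      rw [Finset.mem_singleton] at hg
      subst hg
      exact Finset.mem_union_left _ hi
    · obtain ⟨a, b, hab, hS⟩ := Finset.card_eq_two.mp h
      obtain ⟨i, hi⟩ := hidx a (hSM (hS ▸ by simp))
      obtain ⟨j, hj⟩ := hidx b (hSM (hS ▸ by simp))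
      by_cases hij : i = j
      · obtain ⟨k, hk⟩ := exists_ne i
        refine ⟨i, k, fun hh => hk hh.symm, ?_⟩
        rw [hS]
        intro g hg
        rw [Finset.mem_insert, Finset.mem_singleton] at hg
        rcases hg with rfl | rfl
        · exact Finset.mem_union_left _ hi
        · exact Finset.mem_union_left _ (hij ▸ hj)
      · refine ⟨i, j, hij, ?_⟩
        rw [hS]
        intro g hg
        rw [Finset.mem_insert, Finset.mem_singleton] at hg
        rcases hg with rfl | rfl
        · exact Finset.mem_union_left _ hi
        · exact Finset.mem_union_right _ hj
  obtain ⟨i0, j0, hij0, hScov⟩ := hcover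
  -- the merged partition
  set Q : Fin (m + 1) → Finset ℕ :=
    fun k => (if j0.succAbove k = i0 then P i0 ∪ P j0 else P (j0.succAbove k)) \ S with hQdef
  have hQpart : IsPartition Q (M \ S) := by
    constructor
    · intro a b hab
      have hinj : j0.succAbove a ≠ j0.succAbove b := fun hh => hab (Fin.succAbove_right_injective hh)
      have ha' : j0.succAbove a ≠ j0 := Fin.succAbove_ne j0 a
      have hb' : j0.succAbove b ≠ j0 := Fin.succAbove_ne j0 b
      simp only [hQdef]
      refine Disjoint.mono Finset.sdiff_subset Finset.sdiff_subset ?_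
      split_ifs with h1 h2 h2
      · exact absurd (h1.trans h2.symm) hinj
      · exact Finset.disjoint_union_left.mpr
          ⟨hP.1 _ _ (Ne.symm h2), hP.1 _ _ (Ne.symm hb')⟩
      · exact Finset.disjoint_union_right.mpr
          ⟨hP.1 _ _ h1, hP.1 _ _ ha'⟩
      · exact hP.1 _ _ hinj
    · ext g
      simp only [hQdef, Finset.mem_biUnion, Finset.mem_univ, true_and, Finset.mem_sdiff]
      constructor
      · rintro ⟨k, hg, hgS⟩
        refine ⟨?_, hgS⟩
        split_ifs at hg with h
        · rcases Finset.mem_union.mp hg with h' | h'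
          · exact hPsub i0 h'
          · exact hPsub j0 h'
        · exact hPsub _ hg
      · rintro ⟨hgM, hgS⟩
        have : g ∈ Finset.univ.biUnion P := hP.2 ▸ hgM
        obtain ⟨i, -, hi⟩ := Finset.mem_biUnion.mp this
        by_cases hij : i = j0
        · obtain ⟨k, hk⟩ := Fin.exists_succAbove_eq hij0
          refine ⟨k, ?_, hgS⟩
          rw [hk, if_pos rfl]
          exact Finset.mem_union_right _ (hij ▸ hi)
        · obtain ⟨k, hk⟩ := Fin.exists_succAbove_eq hij
          refine ⟨k, ?_, hgS⟩
          rw [hk]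
          split_ifs with h
          · exact Finset.mem_union_left _ (h ▸ hi)
          · exact hi
  -- value of each new bundle is at least μ
  have hQval : ∀ k : Fin (m + 1), μ ≤ (Q k).sum v := by
    intro k
    simp only [hQdef]
    split_ifs with h
    · have hsub : S ⊆ P i0 ∪ P j0 := hScov
      have hdis : Disjoint (P i0) (P j0) := hP.1 i0 j0 hij0
      have h1 : ((P i0 ∪ P j0) \ S).sum v = (P i0).sum v + (P j0).sum v - S.sum v := by
        have := Finset.sum_sdiff (f := v) hsub
        rw [Finset.sum_union hdis] at this
        linarith
      rw [h1]
      have := hbund i0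
      have := hbund j0
      linarith
    · have hk1 : j0.succAbove k ≠ j0 := Fin.succAbove_ne j0 k
      have hdisS : Disjoint (P (j0.succAbove k)) S := by
        apply Finset.disjoint_left.mpr
        intro g hg hgS
        rcases Finset.mem_union.mp (hScov hgS) with h' | h'
        · exact (Finset.disjoint_left.mp (hP.1 _ _ h) hg) h'
        · exact (Finset.disjoint_left.mp (hP.1 _ _ hk1) hg) h'
      rw [Finset.sdiff_eq_self_of_disjoint hdisS]
      exact hbund _
  -- conclude
  have hgoal : μ ≤ MMS v (m + 1) (M \ S) := by
    have hy : (⨅ k, (Q k).sum v) ∈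
        {x : ℝ | ∃ P : Fin (m + 1) → Finset ℕ, IsPartition P (M \ S) ∧ x = ⨅ j, (P j).sum v} :=
      ⟨Q, hQpart, rfl⟩
    calc μ ≤ ⨅ k, (Q k).sum v := le_ciInf hQval
      _ ≤ MMS v (m + 1) (M \ S) := le_csSup (Set.Finite.bddAbove (mmsSet_finite v (m + 1) (M \ S))) hy
  simpa using hgoal
end

section
/- Let goods be indexed 1,…,m with an additive valuation v satisfying v(1) ≥ v(2) ≥ … ≥ v(m), and let n ≥ 2 be an integer. Let g_1, g_2, g_3 ∈ {1,…,m} be pairwise distinct goods with g_1 ≥ 2n−1, g_2 ≥ 2n and g_3 ≥ 2n+1. Then MMS^{n−1}_v({1,…,m} ∖ {g_1, g_2, g_3}) ≥ MMS^n_v({1,…,m}). -/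
open Finset

lemma mms_bddAbove (v : ℕ → ℝ) (d : ℕ) (S : Finset ℕ) :
    BddAbove {x : ℝ | ∃ P : Fin d → Finset ℕ, IsPartition P S ∧ x = ⨅ j, (P j).sum v} := by
  refine ⟨∑ k ∈ S, |v k|, ?_⟩
  rintro x ⟨P, ⟨hdisj, huni⟩, rfl⟩
  rcases isEmpty_or_nonempty (Fin d) with he | hne
  · rw [Real.iInf_of_isEmpty]
    exact Finset.sum_nonneg fun k _ => abs_nonneg _
  · obtain ⟨j⟩ := hne
    refine le_trans (ciInf_le (Set.Finite.bddBelow (Set.finite_range _)) j) ?_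
    have hsub : P j ⊆ S := huni ▸ Finset.subset_biUnion_of_mem P (mem_univ j)
    calc (P j).sum v ≤ (P j).sum (fun k => |v k|) :=
          Finset.sum_le_sum fun k _ => le_abs_self _
      _ ≤ ∑ k ∈ S, |v k| :=
          Finset.sum_le_sum_of_subset_of_nonneg hsub (fun k _ _ => abs_nonneg _)

lemma mms_nonempty (v : ℕ → ℝ) {d : ℕ} (hd : 0 < d) (S : Finset ℕ) :
    {x : ℝ | ∃ P : Fin d → Finset ℕ, IsPartition P S ∧ x = ⨅ j, (P j).sum v}.Nonempty := by
  classical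
  refine ⟨_, fun j => if j = ⟨0, hd⟩ then S else ∅, ⟨?_, ?_⟩, rfl⟩
  · intro i j hij
    by_cases hi : i = ⟨0, hd⟩ <;> by_cases hj : j = ⟨0, hd⟩ <;> simp_all
  · ext x
    simp only [mem_biUnion, mem_univ, true_and]
    constructor
    · rintro ⟨j, hj⟩
      by_cases h : j = ⟨0, hd⟩ <;> simp_all
    · intro hx
      exact ⟨⟨0, hd⟩, by simp [hx]⟩

lemma mms_transfer (v : ℕ → ℝ) {d : ℕ} (hd : 0 < d) (S T : Finset ℕ) (ψ : ℕ → ℕ)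
    (hinj : ∀ x ∈ S, ∀ y ∈ S, ψ x = ψ y → x = y)
    (himg : S.image ψ = T)
    (hval : ∀ k ∈ S, v k ≤ v (ψ k)) :
    MMS v d S ≤ MMS v d T := by
  classical
  haveI : Nonempty (Fin d) := ⟨⟨0, hd⟩⟩
  refine csSup_le (mms_nonempty v hd S) ?_
  rintro x ⟨P, ⟨hdisj, huni⟩, rfl⟩
  have hsub : ∀ j, P j ⊆ S := fun j => huni ▸ Finset.subset_biUnion_of_mem P (mem_univ j)
  have hQpart : IsPartition (fun j => (P j).image ψ) T := by
    constructor
    · intro i j hij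
      rw [Finset.disjoint_left]
      rintro a ha hb
      simp only [Finset.mem_image] at ha hb
      obtain ⟨x1, hx1, rfl⟩ := ha
      obtain ⟨x2, hx2, he⟩ := hb
      have := hinj x2 (hsub j hx2) x1 (hsub i hx1) he
      subst this
      exact (Finset.disjoint_left.mp (hdisj i j hij) hx1) hx2
    · rw [← Finset.biUnion_image, huni, himg]
  have hle : (⨅ j, (P j).sum v) ≤ ⨅ j, ((P j).image ψ).sum v := by
    refine le_ciInf fun j => ?_
    refine le_trans (ciInf_le (Set.Finite.bddBelow (Set.finite_range _)) j) ?_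
    rw [Finset.sum_image (fun x hx y hy => hinj x (hsub j hx) y (hsub j hy))]
    exact Finset.sum_le_sum fun k hk => hval k (hsub j hk)
  exact hle.trans (le_csSup (mms_bddAbove v d T) ⟨_, hQpart, rfl⟩)

lemma psi_spec (m a b c h₁ h₂ h₃ : ℕ) (hab : a < b) (hbc : b < c)
    (o12 : h₁ < h₂) (o23 : h₂ < h₃) (ha : a ≤ h₁) (hb : b ≤ h₂) (hc : c ≤ h₃)
    (ha1 : 1 ≤ a) (h11 : 1 ≤ h₁) (hcm : c ≤ m) (h3m : h₃ ≤ m) :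
    ∃ ψ : ℕ → ℕ,
      (∀ x ∈ Icc 1 m \ {a, b, c}, ∀ y ∈ Icc 1 m \ {a, b, c}, ψ x = ψ y → x = y) ∧
      (Icc 1 m \ {a, b, c}).image ψ = Icc 1 m \ {h₁, h₂, h₃} ∧
      (∀ k ∈ Icc 1 m \ {a, b, c}, ψ k ≤ k ∧ 1 ≤ ψ k) := by
  classical
  obtain ⟨f, hf⟩ : ∃ f : ℕ → ℕ, ∀ k, f k =
      if k < a then k else if k < b then k - 1 else if k < c then k - 2 else k - 3 :=
    ⟨_, fun k => rfl⟩
  obtain ⟨g, hg⟩ : ∃ g : ℕ → ℕ, ∀ r, g r =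
      if r < h₁ then r else if r + 1 < h₂ then r + 1 else if r + 2 < h₃ then r + 2 else r + 3 :=
    ⟨_, fun r => rfl⟩
  have hmem : ∀ k, k ∈ Icc 1 m \ {a, b, c} ↔ (1 ≤ k ∧ k ≤ m ∧ k ≠ a ∧ k ≠ b ∧ k ≠ c) := by
    intro k
    simp only [mem_sdiff, mem_Icc, mem_insert, mem_singleton]
    tauto
  have hmemT : ∀ k, k ∈ Icc 1 m \ {h₁, h₂, h₃} ↔ (1 ≤ k ∧ k ≤ m ∧ k ≠ h₁ ∧ k ≠ h₂ ∧ k ≠ h₃) := by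
    intro k
    simp only [mem_sdiff, mem_Icc, mem_insert, mem_singleton]
    tauto
  have hgmono : ∀ r s : ℕ, r < s → g r < g s := by
    intro r s hrs
    rw [hg r, hg s]
    split_ifs <;> omega
  have hfmono : ∀ x y : ℕ, (1 ≤ x ∧ x ≤ m ∧ x ≠ a ∧ x ≠ b ∧ x ≠ c) →
      (1 ≤ y ∧ y ≤ m ∧ y ≠ a ∧ y ≠ b ∧ y ≠ c) → x < y → f x < f y := by
    intro x y hx hy hxy
    rw [hf x, hf y]
    split_ifs <;> omega
  have hinj : ∀ x ∈ Icc 1 m \ {a, b, c}, ∀ y ∈ Icc 1 m \ {a, b, c},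
      g (f x) = g (f y) → x = y := by
    intro x hx y hy hxy
    rw [hmem] at hx hy
    rcases lt_trichotomy x y with h | h | h
    · exact absurd hxy (hgmono _ _ (hfmono x y hx hy h)).ne
    · exact h
    · exact absurd hxy.symm (hgmono _ _ (hfmono y x hy hx h)).ne
  have hmaps : ∀ k ∈ Icc 1 m \ {a, b, c},
      g (f k) ∈ Icc 1 m \ {h₁, h₂, h₃} ∧ g (f k) ≤ k ∧ 1 ≤ g (f k) := by
    intro k hk
    rw [hmem] at hk
    rw [hmemT, hf k]
    split_ifs <;> (rw [hg]; split_ifs <;> omega)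
  have habc : ({a, b, c} : Finset ℕ) ⊆ Icc 1 m := by
    intro x hx
    simp only [mem_insert, mem_singleton] at hx
    rw [mem_Icc]
    omega
  have hh : ({h₁, h₂, h₃} : Finset ℕ) ⊆ Icc 1 m := by
    intro x hx
    simp only [mem_insert, mem_singleton] at hx
    rw [mem_Icc]
    omega
  have hcard1 : ({a, b, c} : Finset ℕ).card = 3 := by
    rw [card_insert_of_notMem (by simp; omega), card_insert_of_notMem (by simp; omega),
      card_singleton]
  have hcard2 : ({h₁, h₂, h₃} : Finset ℕ).card = 3 := by
    rw [card_insert_of_notMem (by simp; omega), card_insert_of_notMem (by simp; omega),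
      card_singleton]
  have hcD : (Icc 1 m \ {a, b, c}).card = m - 3 := by
    rw [card_sdiff_of_subset habc, hcard1, Nat.card_Icc]; omega
  have hcT : (Icc 1 m \ {h₁, h₂, h₃}).card = m - 3 := by
    rw [card_sdiff_of_subset hh, hcard2, Nat.card_Icc]; omega
  have himsub : (Icc 1 m \ {a, b, c}).image (fun k => g (f k)) ⊆ Icc 1 m \ {h₁, h₂, h₃} := by
    intro y hy
    rw [mem_image] at hy
    obtain ⟨x, hx, rfl⟩ := hy
    exact (hmaps x hx).1
  have himg : (Icc 1 m \ {a, b, c}).image (fun k => g (f k)) = Icc 1 m \ {h₁, h₂, h₃} := by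
    apply Finset.eq_of_subset_of_card_le himsub
    rw [Finset.card_image_of_injOn (fun x hx y hy => hinj x hx y hy), hcD, hcT]
  exact ⟨fun k => g (f k), hinj, himg, fun k hk => (hmaps k hk).2⟩

lemma sort3 (n : ℕ) (g₁ g₂ g₃ m : ℕ)
    (h12 : g₁ ≠ g₂) (h13 : g₁ ≠ g₃) (h23 : g₂ ≠ g₃)
    (hg₁ : 2*n - 1 ≤ g₁) (hg₂ : 2*n ≤ g₂) (hg₃ : 2*n + 1 ≤ g₃)
    (hm1 : g₁ ≤ m) (hm2 : g₂ ≤ m) (hm3 : g₃ ≤ m) :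
    ∃ h₁ h₂ h₃ : ℕ, ({g₁, g₂, g₃} : Finset ℕ) = {h₁, h₂, h₃} ∧
      h₁ < h₂ ∧ h₂ < h₃ ∧ 2*n - 1 ≤ h₁ ∧ h₃ ≤ m ∧ h₂ ≤ m := by
  rcases lt_trichotomy g₁ g₂ with hab | hab | hab
  · rcases lt_trichotomy g₂ g₃ with hbc | hbc | hbc
    · exact ⟨g₁, g₂, g₃, rfl, hab, hbc, by omega, by omega, by omega⟩
    · omega
    · rcases lt_trichotomy g₁ g₃ with hac | hac | hac
      · exact ⟨g₁, g₃, g₂, by ext x; simp; tauto, hac, hbc, by omega, by omega, by omega⟩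
      · omega
      · exact ⟨g₃, g₁, g₂, by ext x; simp; tauto, hac, hab, by omega, by omega, by omega⟩
  · omega
  · rcases lt_trichotomy g₁ g₃ with hac | hac | hac
    · exact ⟨g₂, g₁, g₃, by ext x; simp; tauto, hab, hac, by omega, by omega, by omega⟩
    · omega
    · rcases lt_trichotomy g₂ g₃ with hbc | hbc | hbc
      · exact ⟨g₂, g₃, g₁, by ext x; simp; tauto, hbc, hac, by omega, by omega, by omega⟩
      · omega
      · exact ⟨g₃, g₂, g₁, by ext x; simp; tauto, hbc, hab, by omega, by omega, by omega⟩

/-- removing three distinct goods with indices at least 2n−1, 2n, 2n+1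
together with one agent does not decrease the MMS value (validity of rule R₂). -/
theorem valid_reduction_R2
    (m n : ℕ) (hn : 2 ≤ n) (v : ℕ → ℝ)
    (hnn : ∀ k ∈ Finset.Icc 1 m, 0 ≤ v k)
    (hord : ∀ j k : ℕ, 1 ≤ j → j ≤ k → k ≤ m → v k ≤ v j)
    (g₁ g₂ g₃ : ℕ)
    (hg₁m : g₁ ∈ Finset.Icc 1 m) (hg₂m : g₂ ∈ Finset.Icc 1 m) (hg₃m : g₃ ∈ Finset.Icc 1 m)
    (h12 : g₁ ≠ g₂) (h13 : g₁ ≠ g₃) (h23 : g₂ ≠ g₃)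
    (hg₁ : 2*n - 1 ≤ g₁) (hg₂ : 2*n ≤ g₂) (hg₃ : 2*n + 1 ≤ g₃) :
    MMS v n (Finset.Icc 1 m) ≤ MMS v (n - 1) (Finset.Icc 1 m \ {g₁, g₂, g₃}) := by
  classical
  obtain ⟨hg1l, hg1r⟩ := mem_Icc.mp hg₁m
  obtain ⟨hg2l, hg2r⟩ := mem_Icc.mp hg₂m
  obtain ⟨hg3l, hg3r⟩ := mem_Icc.mp hg₃m
  have hm : 2*n + 1 ≤ m := le_trans hg₃ hg3r
  obtain ⟨h₁, h₂, h₃, hset, o12, o23, hl1, hu3, hu2⟩ :=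
    sort3 n g₁ g₂ g₃ m h12 h13 h23 hg₁ hg₂ hg₃ hg1r hg2r hg3r
  rw [hset]
  obtain ⟨n', rfl⟩ : ∃ n', n = n' + 1 := ⟨n - 1, by omega⟩
  have hn' : 1 ≤ n' := by omega
  simp only [Nat.add_sub_cancel]
  refine csSup_le (mms_nonempty v (by omega) _) ?_
  rintro x ⟨P, ⟨hdisj, huni⟩, rfl⟩
  -- pigeonhole: some bundle contains ≥ 3 goods from Icc 1 (2n+1)
  have hbu : Finset.univ.biUnion (fun i => P i ∩ Icc 1 (2*(n'+1)+1)) = Icc 1 (2*(n'+1)+1) := by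
    ext y
    simp only [mem_biUnion, mem_univ, true_and, mem_inter]
    constructor
    · rintro ⟨i, _, hy⟩
      exact hy
    · intro hy
      have hy' : y ∈ Finset.univ.biUnion P := by
        rw [huni]
        exact (Icc_subset_Icc le_rfl hm) hy
      rw [mem_biUnion] at hy'
      obtain ⟨i, _, hi⟩ := hy'
      exact ⟨i, hi, hy⟩
  have hsum : ∑ i : Fin (n'+1), (P i ∩ Icc 1 (2*(n'+1)+1)).card = 2*(n'+1)+1 := by
    rw [← Finset.card_biUnion (fun i _ j _ hij =>
      Finset.disjoint_of_subset_left inter_subset_left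
        (Finset.disjoint_of_subset_right inter_subset_left (hdisj i j hij))), hbu, Nat.card_Icc]
    omega
  have hpig : ∃ i : Fin (n'+1), 3 ≤ (P i ∩ Icc 1 (2*(n'+1)+1)).card := by
    by_contra hcon
    push_neg at hcon
    have : ∑ i : Fin (n'+1), (P i ∩ Icc 1 (2*(n'+1)+1)).card ≤ ∑ _i : Fin (n'+1), 2 :=
      Finset.sum_le_sum fun i _ => by have := hcon i; omega
    rw [hsum] at this
    simp only [Finset.sum_const, Finset.card_univ, Fintype.card_fin, smul_eq_mul] at this
    omega
  obtain ⟨i, hUc⟩ := hpig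
  set U := P i ∩ Icc 1 (2*(n'+1)+1) with hU
  have hU0 : U.Nonempty := card_pos.mp (by omega)
  set c := U.max' hU0 with hcdef
  have hcU : c ∈ U := U.max'_mem hU0
  have hU1c : (U.erase c).card = U.card - 1 := card_erase_of_mem hcU
  have hU10 : (U.erase c).Nonempty := card_pos.mp (by omega)
  set b := (U.erase c).max' hU10 with hbdef
  have hbU1 : b ∈ U.erase c := (U.erase c).max'_mem hU10
  have hU2c : ((U.erase c).erase b).card = (U.erase c).card - 1 := card_erase_of_mem hbU1
  have hU20 : ((U.erase c).erase b).Nonempty := card_pos.mp (by omega)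
  set a := ((U.erase c).erase b).max' hU20 with hadef
  have haU2 : a ∈ (U.erase c).erase b := ((U.erase c).erase b).max'_mem hU20
  have hbU : b ∈ U := mem_of_mem_erase hbU1
  have haU : a ∈ U := mem_of_mem_erase (mem_of_mem_erase haU2)
  have hbc : b < c :=
    lt_of_le_of_ne (U.le_max' b hbU) (ne_of_mem_erase hbU1)
  have hab : a < b :=
    lt_of_le_of_ne ((U.erase c).le_max' a (mem_of_mem_erase haU2)) (ne_of_mem_erase haU2)
  have haP : a ∈ P i := (mem_inter.mp haU).1
  have hbP : b ∈ P i := (mem_inter.mp hbU).1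
  have hcP : c ∈ P i := (mem_inter.mp hcU).1
  have haI : 1 ≤ a ∧ a ≤ 2*(n'+1)+1 := mem_Icc.mp (mem_inter.mp haU).2
  have hbI : 1 ≤ b ∧ b ≤ 2*(n'+1)+1 := mem_Icc.mp (mem_inter.mp hbU).2
  have hcI : 1 ≤ c ∧ c ≤ 2*(n'+1)+1 := mem_Icc.mp (mem_inter.mp hcU).2
  -- membership uniqueness in P
  have hPuniq : ∀ (y : ℕ) (k k' : Fin (n'+1)), y ∈ P k → y ∈ P k' → k = k' := by
    intro y k k' hk hk'
    by_contra hne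
    exact (Finset.disjoint_left.mp (hdisj k k' hne) hk) hk'
  have hPsub : ∀ k, P k ⊆ Icc 1 m := fun k =>
    huni ▸ Finset.subset_biUnion_of_mem P (mem_univ k)
  -- the new partition
  set Q : Fin n' → Finset ℕ := fun j =>
    if (j : ℕ) = 0 then P (i.succAbove j) ∪ (P i \ {a, b, c}) else P (i.succAbove j) with hQ
  have hQsubsets : ∀ j, P (i.succAbove j) ⊆ Q j := by
    intro j
    rw [hQ]
    dsimp only
    split_ifs
    · exact subset_union_left
    · exact Subset.rfl
  have hQmem : ∀ (y : ℕ) (j : Fin n'), y ∈ Q j →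
      y ∈ P (i.succAbove j) ∨ ((j : ℕ) = 0 ∧ y ∈ P i \ {a, b, c}) := by
    intro y j hy
    rw [hQ] at hy
    dsimp only at hy
    split_ifs at hy with h0
    · rcases mem_union.mp hy with h | h
      · exact Or.inl h
      · exact Or.inr ⟨h0, h⟩
    · exact Or.inl hy
  have hQdisj : ∀ j j' : Fin n', j ≠ j' → Disjoint (Q j) (Q j') := by
    intro j j' hne
    rw [Finset.disjoint_left]
    intro y hy hy'
    rcases hQmem y j hy with h | ⟨hj0, h⟩ <;> rcases hQmem y j' hy' with h' | ⟨hj0', h'⟩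
    · exact hne (Fin.succAbove_right_injective (hPuniq y _ _ h h'))
    · exact Fin.succAbove_ne i j (hPuniq y _ _ h (mem_sdiff.mp h').1)
    · exact Fin.succAbove_ne i j' (hPuniq y _ _ h' (mem_sdiff.mp h).1)
    · exact hne (Fin.val_injective (hj0.trans hj0'.symm))
  have hQuni : Finset.univ.biUnion Q = Icc 1 m \ {a, b, c} := by
    ext y
    simp only [mem_biUnion, mem_univ, true_and, mem_sdiff, mem_insert, mem_singleton]
    constructor
    · rintro ⟨j, hj⟩
      rcases hQmem y j hj with h | ⟨_, h⟩
      · refine ⟨hPsub _ h, ?_⟩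
        rintro (rfl | rfl | rfl)
        · exact Fin.succAbove_ne i j (hPuniq _ _ _ h haP)
        · exact Fin.succAbove_ne i j (hPuniq _ _ _ h hbP)
        · exact Fin.succAbove_ne i j (hPuniq _ _ _ h hcP)
      · rw [mem_sdiff, mem_insert, mem_insert, mem_singleton] at h
        exact ⟨hPsub _ h.1, h.2⟩
    · rintro ⟨hy, hnot⟩
      have hy' : y ∈ Finset.univ.biUnion P := huni ▸ hy
      rw [mem_biUnion] at hy'
      obtain ⟨k, _, hk⟩ := hy'
      by_cases hki : k = i
      · refine ⟨⟨0, hn'⟩, ?_⟩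
        rw [hQ]
        dsimp only
        rw [if_pos rfl]
        refine mem_union_right _ ?_
        rw [mem_sdiff, mem_insert, mem_insert, mem_singleton]
        exact ⟨hki ▸ hk, hnot⟩
      · obtain ⟨j, hj⟩ := Fin.exists_succAbove_eq hki
        exact ⟨j, hQsubsets j (hj ▸ hk)⟩
  have hQIcc : ∀ j, Q j ⊆ Icc 1 m := by
    intro j
    have h1 : Q j ⊆ Icc 1 m \ {a, b, c} := by
      rw [← hQuni]
      exact Finset.subset_biUnion_of_mem Q (mem_univ j)
    exact h1.trans sdiff_subset
  -- value bound
  haveI : Nonempty (Fin n') := ⟨⟨0, hn'⟩⟩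
  have hxle : (⨅ t, (P t).sum v) ≤ ⨅ j, (Q j).sum v := by
    refine le_ciInf fun j => ?_
    refine le_trans (ciInf_le (Set.Finite.bddBelow (Set.finite_range _)) (i.succAbove j)) ?_
    exact Finset.sum_le_sum_of_subset_of_nonneg (hQsubsets j)
      (fun y hy _ => hnn y (hQIcc j hy))
  have hmid : (⨅ j, (Q j).sum v) ≤ MMS v n' (Icc 1 m \ {a, b, c}) :=
    le_csSup (mms_bddAbove v n' _) ⟨Q, ⟨hQdisj, hQuni⟩, rfl⟩
  -- transfer to {h₁, h₂, h₃}
  obtain ⟨ψ, hinj, himg, hmono⟩ := psi_spec m a b c h₁ h₂ h₃ hab hbc o12 o23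
    (by omega) (by omega) (by omega) (by omega) (by omega) (by omega) hu3
  have htrans : MMS v n' (Icc 1 m \ {a, b, c}) ≤ MMS v n' (Icc 1 m \ {h₁, h₂, h₃}) := by
    refine mms_transfer v hn' _ _ ψ hinj himg ?_
    intro k hk
    obtain ⟨hk1, hk2⟩ := hmono k hk
    have hkm : k ≤ m := (mem_Icc.mp (mem_sdiff.mp hk).1).2
    exact hord (ψ k) k hk2 hk1 hkm
  exact hxle.trans (hmid.trans htrans)
end

section
/- Let v be an additive valuation on a finite set M of goods, let n ≥ 2 be an integer, and let g ∈ M be any good. Then MMS^{n−1}_v(M ∖ {g}) ≥ MMS^n_v(M). (This is the validity of reduction rule R_1, which removes one good together with one agent.) -/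
open Finset

/-- removing any single good together with one agent does not decrease
the MMS value (validity of rule R₁). -/
theorem valid_reduction_R1
    (M : Finset ℕ) (v : ℕ → ℝ) (hnn : ∀ g ∈ M, 0 ≤ v g)
    (n : ℕ) (hn : 2 ≤ n) (g : ℕ) (hg : g ∈ M) :
    MMS v n M ≤ MMS v (n - 1) (M.erase g) := by
  obtain ⟨m, rfl⟩ : ∃ m, n = m + 1 := ⟨n - 1, by omega⟩
  have hm : 1 ≤ m := by omega
  haveI : Nonempty (Fin m) := ⟨⟨0, hm⟩⟩
  haveI : Nonempty (Fin (m + 1 - 1)) := ⟨⟨0, by omega⟩⟩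
  simp only [Nat.add_sub_cancel, MMS]
  set B := {x : ℝ | ∃ P : Fin m → Finset ℕ, IsPartition P (M.erase g) ∧
      x = ⨅ j, (P j).sum v} with hB
  have j0 : Fin m := ⟨0, hm⟩
  -- B is bounded above by the total value of M
  have hbdd : BddAbove B := by
    refine ⟨M.sum v, ?_⟩
    rintro x ⟨P, ⟨hdisj, hun⟩, rfl⟩
    refine le_trans (ciInf_le (Set.Finite.bddBelow (Set.finite_range _)) j0) ?_
    refine Finset.sum_le_sum_of_subset_of_nonneg ?_ (fun a ha _ => hnn a ha)
    intro a ha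
    have : a ∈ M.erase g := hun ▸ Finset.mem_biUnion.2 ⟨j0, mem_univ _, ha⟩
    exact Finset.mem_of_mem_erase this
  -- sSup B is nonnegative
  have hBnonneg : (0 : ℝ) ≤ sSup B := by
    have hmem : (⨅ j : Fin m, ((fun j => if j = j0 then M.erase g else ∅) j).sum v) ∈ B := by
      refine ⟨_, ⟨?_, ?_⟩, rfl⟩
      · intro i j hij
        by_cases hi : i = j0 <;> by_cases hj : j = j0 <;>
          simp_all [Finset.disjoint_empty_left, Finset.disjoint_empty_right]
      · ext x
        simp only [Finset.mem_biUnion, mem_univ, true_and]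
        constructor
        · rintro ⟨j, hj⟩
          by_cases h : j = j0 <;> simp_all
        · intro hx; exact ⟨j0, by simp [hx]⟩
    refine le_trans ?_ (le_csSup hbdd hmem)
    refine le_ciInf fun j => Finset.sum_nonneg fun a ha => ?_
    by_cases h : j = j0
    · subst h; exact hnn a (Finset.mem_of_mem_erase (by simpa using ha))
    · simp [h] at ha
  refine Real.sSup_le ?_ hBnonneg
  rintro x ⟨P, ⟨hdisj, hun⟩, rfl⟩
  -- find the bundle containing g
  obtain ⟨i0, -, hgi0⟩ := Finset.mem_biUnion.1 (hun ▸ hg)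
  have hPsub : ∀ i, P i ⊆ M := fun i a ha =>
    hun ▸ Finset.mem_biUnion.2 ⟨i, mem_univ _, ha⟩
  have hsuccne : ∀ j : Fin m, i0.succAbove j ≠ i0 := fun j => Fin.succAbove_ne i0 j
  set Q : Fin m → Finset ℕ :=
    fun j => if j = j0 then P (i0.succAbove j) ∪ (P i0).erase g else P (i0.succAbove j)
    with hQdef
  have hPQ : ∀ j, P (i0.succAbove j) ⊆ Q j := by
    intro j
    by_cases h : j = j0 <;> simp [hQdef, h, Finset.subset_union_left]
  have hQsub : ∀ j, Q j ⊆ M.erase g := by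
    intro j a ha
    have hbase : ∀ b ∈ P (i0.succAbove j), b ∈ M.erase g := by
      intro b hb
      refine Finset.mem_erase.2 ⟨?_, hPsub _ hb⟩
      rintro rfl
      exact (hdisj _ _ (hsuccne j)).forall_ne_finset hb hgi0 rfl
    by_cases h : j = j0
    · simp only [hQdef, h, if_pos rfl, Finset.mem_union] at ha
      rcases ha with ha | ha
      · exact hbase a (h ▸ ha)
      · exact Finset.mem_erase.2 ⟨(Finset.mem_erase.1 ha).1, hPsub _ (Finset.mem_of_mem_erase ha)⟩
    · simp only [hQdef, if_neg h] at ha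
      exact hbase a ha
  have hQpart : IsPartition Q (M.erase g) := by
    constructor
    · intro i j hij
      have hinj : i0.succAbove i ≠ i0.succAbove j :=
        fun h => hij (Fin.succAbove_right_injective h)
      have hd1 : Disjoint (P (i0.succAbove i)) (P (i0.succAbove j)) := hdisj _ _ hinj
      have hdi : Disjoint ((P i0).erase g) (P (i0.succAbove j)) :=
        Disjoint.mono_left (Finset.erase_subset _ _) (hdisj _ _ (Ne.symm (hsuccne j)))
      have hdj : Disjoint (P (i0.succAbove i)) ((P i0).erase g) :=
        Disjoint.mono_right (Finset.erase_subset _ _) (hdisj _ _ (hsuccne i))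
      by_cases hi : i = j0 <;> by_cases hj : j = j0 <;>
        simp_all [hQdef, Finset.disjoint_union_left, Finset.disjoint_union_right]
    · ext x
      simp only [Finset.mem_biUnion, mem_univ, true_and]
      constructor
      · rintro ⟨j, hj⟩; exact hQsub j hj
      · intro hx
        obtain ⟨hxg, hxM⟩ := Finset.mem_erase.1 hx
        obtain ⟨i, -, hxi⟩ := Finset.mem_biUnion.1 (hun ▸ hxM)
        by_cases h : i = i0
        · subst h
          exact ⟨j0, by simp [hQdef, Finset.mem_erase, hxg, hxi]⟩
        · obtain ⟨j, rfl⟩ := Fin.exists_succAbove_eq h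
          exact ⟨j, hPQ j hxi⟩
  refine le_trans ?_ (le_csSup hbdd ⟨Q, hQpart, rfl⟩)
  refine le_ciInf fun j => ?_
  refine le_trans (ciInf_le (Set.Finite.bddBelow (Set.finite_range _)) (i0.succAbove j)) ?_
  refine Finset.sum_le_sum_of_subset_of_nonneg (hPQ j) fun a ha _ => ?_
  exact hnn a (Finset.mem_of_mem_erase (hQsub j ha))
end

section
/- Let goods be indexed 1,…,m with an additive valuation v satisfying v(1) ≥ v(2) ≥ … ≥ v(m), let n ≥ 1 with m ≥ 2n, and suppose v is normalized for n agents, i.e., there is a partition (P_1,…,P_n) of {1,…,m} with v(P_j) = 1 for every j. Then for every k ∈ {1,…,n}, if v(k) + v(2n−k+1) > 1, then v(2n−k+1) ≤ 1/3 and v(k) > 2/3. -/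
open Finset

/-- in an ordered normalized instance, if v(k)+v(2n−k+1) > 1 then
v(2n−k+1) ≤ 1/3 and v(k) > 2/3. -/
theorem upper_one_third
    (m n : ℕ) (hn : 1 ≤ n) (hm : 2*n ≤ m)
    (v : ℕ → ℝ) (hnn : ∀ k, 0 ≤ v k)
    (hord : ∀ j k : ℕ, 1 ≤ j → j ≤ k → k ≤ m → v k ≤ v j)
    (hnorm : ∃ P : Fin n → Finset ℕ,
      IsPartition P (Finset.Icc 1 m) ∧ ∀ j, (P j).sum v = 1) :
    ∀ k, 1 ≤ k → k ≤ n → 1 < v k + v (2*n - k + 1) →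
      v (2*n - k + 1) ≤ 1/3 ∧ 2/3 < v k := by
  classical
  obtain ⟨P, ⟨hdisj, hcover⟩, hval⟩ := hnorm
  intro k hk1 hkn hbig
  have hsub : ∀ (j : Fin n) (S : Finset ℕ), S ⊆ P j → S.sum v ≤ 1 := by
    intro j S hS
    rw [← hval j]
    exact Finset.sum_le_sum_of_subset_of_nonneg hS (fun i _ _ => hnn i)
  have key : v (2*n-k+1) ≤ 1/3 := by
    by_contra h3
    push_neg at h3
    have hkt : k ≤ 2*n-k+1 := by omega
    have htm : 2*n-k+1 ≤ m := by omega
    set t := 2*n-k+1 with ht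
    set T := Finset.Icc 1 t with hTdef
    set A := fun j => P j ∩ T with hAdef
    have hAsub : ∀ j, A j ⊆ P j := fun j => Finset.inter_subset_left
    have hAsubT : ∀ j, A j ⊆ T := fun j => Finset.inter_subset_right
    have hvt : ∀ a ∈ T, v t ≤ v a := by
      intro a ha
      rw [hTdef, Finset.mem_Icc] at ha
      exact hord a t ha.1 ha.2 htm
    have hvk : ∀ a, a ∈ T → a ≤ k → v k ≤ v a := by
      intro a ha hak
      rw [hTdef, Finset.mem_Icc] at ha
      exact hord a k ha.1 hak (by omega)
    have hTcov : ∀ a ∈ T, ∃ j, a ∈ A j := by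
      intro a ha
      have haM : a ∈ Finset.Icc 1 m := by
        rw [hTdef, Finset.mem_Icc] at ha
        rw [Finset.mem_Icc]; omega
      rw [← hcover, Finset.mem_biUnion] at haM
      obtain ⟨j, _, hj⟩ := haM
      exact ⟨j, Finset.mem_inter.mpr ⟨hj, ha⟩⟩
    -- every bundle contains at most 2 goods of T
    have h2 : ∀ j, (A j).card ≤ 2 := by
      intro j
      by_contra hc
      push_neg at hc
      obtain ⟨S, hS, hScard⟩ := Finset.exists_subset_card_eq (Nat.succ_le_of_lt hc)
      have hsum : S.card • v t ≤ S.sum v :=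
        Finset.card_nsmul_le_sum S v (v t) (fun a haS => hvt a (hAsubT j (hS haS)))
      rw [hScard] at hsum
      have hle : S.sum v ≤ 1 := hsub j S (hS.trans (hAsub j))
      have : (3:ℝ) * v t ≤ S.sum v := by
        simpa [nsmul_eq_mul] using hsum
      linarith
    -- a bundle containing a good ≤ k contains at most 1 good of T
    have h1 : ∀ j, ((A j) ∩ Finset.Icc 1 k).Nonempty → (A j).card ≤ 1 := by
      intro j hne
      obtain ⟨c, hc⟩ := hne
      by_contra hcard
      push_neg at hcard
      obtain ⟨d, hd, hdc⟩ := Finset.exists_mem_ne hcard c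
      have hcA : c ∈ A j := (Finset.mem_inter.mp hc).1
      have hck : c ≤ k := (Finset.mem_Icc.mp (Finset.mem_inter.mp hc).2).2
      have hpair : ({c, d} : Finset ℕ).sum v ≤ 1 := by
        apply hsub j
        intro x hx
        simp only [Finset.mem_insert, Finset.mem_singleton] at hx
        rcases hx with rfl | rfl
        · exact hAsub j hcA
        · exact hAsub j hd
      rw [Finset.sum_pair (Ne.symm hdc)] at hpair
      have h1c : v k ≤ v c := hvk c (hAsubT j hcA) hck
      have h1d : v t ≤ v d := hvt d (hAsubT j hd)
      linarith
    set B : Finset (Fin n) :=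
      Finset.univ.filter (fun j => ((A j) ∩ Finset.Icc 1 k).Nonempty) with hBdef
    -- the first k goods occupy at least k distinct bundles
    have hBk : k ≤ B.card := by
      have hsubB : Finset.Icc 1 k ⊆ B.biUnion (fun j => A j ∩ Finset.Icc 1 k) := by
        intro a ha
        have haT : a ∈ T := by
          rw [Finset.mem_Icc] at ha
          rw [hTdef, Finset.mem_Icc]; omega
        obtain ⟨j, hj⟩ := hTcov a haT
        have hmem : a ∈ A j ∩ Finset.Icc 1 k := Finset.mem_inter.mpr ⟨hj, ha⟩
        refine Finset.mem_biUnion.mpr ⟨j, ?_, hmem⟩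
        rw [hBdef]
        exact Finset.mem_filter.mpr ⟨Finset.mem_univ j, ⟨a, hmem⟩⟩
      calc k = (Finset.Icc 1 k).card := by rw [Nat.card_Icc]; omega
        _ ≤ (B.biUnion (fun j => A j ∩ Finset.Icc 1 k)).card := Finset.card_le_card hsubB
        _ ≤ ∑ j ∈ B, (A j ∩ Finset.Icc 1 k).card := Finset.card_biUnion_le
        _ ≤ ∑ j ∈ B, 1 := by
            apply Finset.sum_le_sum
            intro j hj
            have hjB : ((A j) ∩ Finset.Icc 1 k).Nonempty :=
              (Finset.mem_filter.mp hj).2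
            exact le_trans (Finset.card_le_card Finset.inter_subset_left) (h1 j hjB)
        _ = B.card := by rw [Finset.sum_const, smul_eq_mul, mul_one]
    -- counting
    have hTcard : t ≤ ∑ j, (A j).card := by
      have hsubT : T ⊆ Finset.univ.biUnion A := by
        intro a ha
        obtain ⟨j, hj⟩ := hTcov a ha
        exact Finset.mem_biUnion.mpr ⟨j, Finset.mem_univ j, hj⟩
      calc t = T.card := by rw [hTdef, Nat.card_Icc]; omega
        _ ≤ (Finset.univ.biUnion A).card := Finset.card_le_card hsubT
        _ ≤ ∑ j, (A j).card := Finset.card_biUnion_le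
    have hsplit := Finset.sum_filter_add_sum_filter_not Finset.univ
      (fun j => ((A j) ∩ Finset.Icc 1 k).Nonempty) (fun j => (A j).card)
    rw [← hBdef] at hsplit
    have hB1 : ∑ j ∈ B, (A j).card ≤ B.card := by
      calc ∑ j ∈ B, (A j).card ≤ ∑ j ∈ B, 1 := by
            apply Finset.sum_le_sum
            intro j hj
            exact h1 j (Finset.mem_filter.mp hj).2
        _ = B.card := by rw [Finset.sum_const, smul_eq_mul, mul_one]
    set C : Finset (Fin n) :=
      Finset.univ.filter (fun j => ¬((A j) ∩ Finset.Icc 1 k).Nonempty) with hCdef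
    have hC2 : ∑ j ∈ C, (A j).card ≤ 2 * C.card := by
      calc ∑ j ∈ C, (A j).card ≤ ∑ j ∈ C, 2 :=
            Finset.sum_le_sum (fun j _ => h2 j)
        _ = 2 * C.card := by rw [Finset.sum_const, smul_eq_mul, mul_comm]
    have hBC : B.card + C.card = n := by
      have := Finset.card_filter_add_card_filter_not
        (s := (Finset.univ : Finset (Fin n)))
        (p := fun j => ((A j) ∩ Finset.Icc 1 k).Nonempty)
      simpa [hBdef, hCdef] using this
    omega
  refine ⟨key, ?_⟩
  linarith
end

section
/- Let 0 ≤ δ ≤ 1/4, and let goods be indexed 1,…,m with an additive valuation v satisfying v(1) ≥ v(2) ≥ … ≥ v(m) (with the convention v(k)=0 for k > m), m ≥ 2n, and suppose v is normalized for n agents, i.e., there is a partition (P_1,…,P_n) of {1,…,m} with v(P_j)=1 for every j. Suppose v(1) + v(2n+1) < 3/4 + δ, and suppose there exists k ∈ {1,…,n} with v(k) + v(2n−k+1) > 1. Then v(2n+1) < 1/12 + δ. -/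
open Finset

/-!
Put `K = 2n - k + 1`. As `v k + v K > 1` and every bundle is worth `1`, no bundle holds a good of
`[1, k]` together with a second good of `[1, K]`. Hence, for each bundle `B`, either `B` holds three
goods of `[1, K]` or `#(B ∩ [1, K]) + #(B ∩ [1, k]) ≤ 2`; summing the latter over all `n` bundles
would give `K + k = 2n + 1 ≤ 2n`. So some bundle holds three goods worth at least `v K` each, i.e.
`v K ≤ 1/3`, and then `v 1 ≥ v k > 2/3` turns `v 1 + v (2n+1) < 3/4 + δ` into the claim.
-/

theorem IsPartition.sum_card_inter {d : ℕ} {P : Fin d → Finset ℕ} {S : Finset ℕ}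
    (hP : IsPartition P S) (T : Finset ℕ) : ∑ j, #(P j ∩ T) = #(S ∩ T) := by
  rw [← hP.2, biUnion_inter, card_biUnion]
  intro i _ j _ hij
  exact (hP.1 i j hij).mono inter_subset_left inter_subset_left

theorem card_inter_add_card_inter_le_two {α : Type*} [DecidableEq α] {B X Y : Finset α}
    (hXY : X ⊆ Y) (hsingle : ∀ a ∈ B ∩ X, ∀ b ∈ B ∩ Y, a = b) (hY : #(B ∩ Y) ≤ 2) :
    #(B ∩ Y) + #(B ∩ X) ≤ 2 := by
  have hle : #(B ∩ X) ≤ #(B ∩ Y) := card_le_card (inter_subset_inter_left hXY)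
  rcases (B ∩ X).eq_empty_or_nonempty with hX | ⟨a, ha⟩
  · rw [hX, card_empty]
    omega
  · have hY1 : #(B ∩ Y) ≤ 1 :=
      card_le_one.2 fun b hb c hc => (hsingle a ha b hb).symm.trans (hsingle a ha c hc)
    omega

theorem IsPartition.exists_three_le_card_inter {d : ℕ} {P : Fin d → Finset ℕ}
    {S X Y : Finset ℕ} (hP : IsPartition P S) (hXY : X ⊆ Y) (hYS : Y ⊆ S)
    (hsingle : ∀ j, ∀ a ∈ P j ∩ X, ∀ b ∈ P j ∩ Y, a = b) (hcard : 2 * d < #Y + #X) :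
    ∃ j, 3 ≤ #(P j ∩ Y) := by
  by_contra! h
  have hsum : ∑ j, (#(P j ∩ Y) + #(P j ∩ X)) ≤ ∑ _j : Fin d, 2 :=
    sum_le_sum fun j _ => card_inter_add_card_inter_le_two hXY (hsingle j) (Nat.le_of_lt_succ (h j))
  rw [sum_add_distrib, hP.sum_card_inter, hP.sum_card_inter, inter_eq_right.2 hYS,
    inter_eq_right.2 (hXY.trans hYS), sum_const, card_univ, Fintype.card_fin, smul_eq_mul] at hsum
  omega

section Valuation

variable {v : ℕ → ℝ}

theorem eq_of_mem_of_one_lt_add (hnn : ∀ i, 0 ≤ v i) {B : Finset ℕ} (hB : B.sum v ≤ 1)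
    {a b : ℕ} (ha : a ∈ B) (hb : b ∈ B) (hab : 1 < v a + v b) : a = b := by
  by_contra hne
  linarith [add_le_sum (fun i _ => hnn i) ha hb hne]

theorem card_inter_Icc_mul_le_sum (hnn : ∀ i, 0 ≤ v i) {m : ℕ}
    (hv : AntitoneOn v (Set.Icc 1 m)) (B : Finset ℕ) {K : ℕ} (hKm : K ≤ m) :
    #(B ∩ Icc 1 K) * v K ≤ B.sum v := by
  calc #(B ∩ Icc 1 K) * v K = #(B ∩ Icc 1 K) • v K := (nsmul_eq_mul _ _).symm
    _ ≤ (B ∩ Icc 1 K).sum v := by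
      refine card_nsmul_le_sum _ _ _ fun i hi => ?_
      obtain ⟨hi1, hiK⟩ := mem_Icc.1 (mem_inter.1 hi).2
      exact hv ⟨hi1, hiK.trans hKm⟩ ⟨hi1.trans hiK, hKm⟩ hiK
    _ ≤ B.sum v := sum_le_sum_of_subset_of_nonneg inter_subset_left fun i _ _ => hnn i

end Valuation

theorem N2_small_good_bound_general
    (δ : ℝ)
    (m n : ℕ) (hm : 2*n ≤ m)
    (v : ℕ → ℝ) (hnn : ∀ k, 0 ≤ v k)
    (hord : ∀ j k : ℕ, 1 ≤ j → j ≤ k → k ≤ m → v k ≤ v j)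
    (hnorm : ∃ P : Fin n → Finset ℕ,
      IsPartition P (Finset.Icc 1 m) ∧ ∀ j, (P j).sum v = 1)
    (hR4 : v 1 + v (2*n + 1) < 3/4 + δ)
    (hN2 : ∃ k, 1 ≤ k ∧ k ≤ n ∧ 1 < v k + v (2*n - k + 1)) :
    v (2*n + 1) < 1/12 + δ := by
  obtain ⟨k, hk1, hkn, hkv⟩ := hN2
  obtain ⟨P, hP, hsum⟩ := hnorm
  have hv : AntitoneOn v (Set.Icc 1 m) := fun a ha b hb hab => hord a b ha.1 hab hb.2
  set K := 2 * n - k + 1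
  have hsingle : ∀ j, ∀ a ∈ P j ∩ Icc 1 k, ∀ b ∈ P j ∩ Icc 1 K, a = b := by
    intro j a ha b hb
    simp only [mem_inter, mem_Icc] at ha hb
    refine eq_of_mem_of_one_lt_add hnn (hsum j).le ha.1 hb.1 ?_
    linarith [hv ⟨ha.2.1, by omega⟩ ⟨hk1, by omega⟩ ha.2.2,
      hv ⟨hb.2.1, by omega⟩ ⟨by omega, by omega⟩ hb.2.2]
  obtain ⟨j, hj⟩ := hP.exists_three_le_card_inter (Icc_subset_Icc_right (by omega))
    (Icc_subset_Icc_right (by omega)) hsingle (by simp only [Nat.card_Icc]; omega)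
  have hvK : 3 * v K ≤ 1 := by
    calc 3 * v K ≤ #(P j ∩ Icc 1 K) * v K := by gcongr; exacts [hnn K, by exact_mod_cast hj]
      _ ≤ 1 := hsum j ▸ card_inter_Icc_mul_le_sum hnn hv (P j) (by omega)
  linarith [hv ⟨le_rfl, by omega⟩ ⟨hk1, by omega⟩ hk1]

/-- for agents in N², the (2n+1)-st good is worth less than 1/12 + δ. -/
theorem N2_small_good_bound
    (δ : ℝ) (hδ0 : 0 ≤ δ) (hδ : δ ≤ 1/4)
    (m n : ℕ) (hn : 1 ≤ n) (hm : 2*n ≤ m)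
    (v : ℕ → ℝ) (hnn : ∀ k, 0 ≤ v k) (hzero : ∀ k, m < k → v k = 0)
    (hord : ∀ j k : ℕ, 1 ≤ j → j ≤ k → k ≤ m → v k ≤ v j)
    (hnorm : ∃ P : Fin n → Finset ℕ,
      IsPartition P (Finset.Icc 1 m) ∧ ∀ j, (P j).sum v = 1)
    (hR4 : v 1 + v (2*n + 1) < 3/4 + δ)
    (hN2 : ∃ k, 1 ≤ k ∧ k ≤ n ∧ 1 < v k + v (2*n - k + 1)) :
    v (2*n + 1) < 1/12 + δ :=
  N2_small_good_bound_general δ m n hm v hnn hord hnorm hR4 hN2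
end

section
/- Let v be an additive valuation on a finite set M of goods, let ε ≥ 0, and let n > r ≥ 0 be integers. Suppose MMS^n_v(M) ≥ 1, and let H, L ⊆ M be disjoint sets of goods with |H| = |L| = r such that v(h) < 3/4 + ε for every h ∈ H and v(g) < 1/4 + ε/3 for every g ∈ L. Then MMS^{n−r}_v(M ∖ (H ∪ L)) ≥ 1 − 4ε. (This is the core of the lemma controlling the MMS loss caused by r applications of reduction rule R_4, where each application removes one heavy good of value < 3/4+ε and one light good of value < 1/4+ε/3.) -/
open Finset

lemma exists_partition (S : Finset ℕ) (d : ℕ) (hd : 0 < d) :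
    ∃ P : Fin d → Finset ℕ, IsPartition P S := by
  refine ⟨fun j => if j = ⟨0, hd⟩ then S else ∅, ?_, ?_⟩
  · intro i j hij
    by_cases hi : i = ⟨0, hd⟩
    · have : ¬ j = ⟨0, hd⟩ := by rintro rfl; exact hij hi
      simp [hi, this]
    · simp [hi]
  · ext x
    simp only [mem_biUnion, mem_univ, true_and]
    constructor
    · rintro ⟨i, hi⟩
      by_cases h : i = ⟨0, hd⟩ <;> simp [h] at hi
      · exact hi
    · intro hx; exact ⟨⟨0, hd⟩, by simp [hx]⟩

lemma partition_subset {d : ℕ} {P : Fin d → Finset ℕ} {S : Finset ℕ}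
    (hP : IsPartition P S) (j : Fin d) : P j ⊆ S := by
  rw [← hP.2]; exact Finset.subset_biUnion_of_mem P (mem_univ j)

lemma mms_set_bddAbove (v : ℕ → ℝ) (d : ℕ) (S : Finset ℕ) (hv : ∀ g ∈ S, 0 ≤ v g)
    (hd : 0 < d) :
    BddAbove {x : ℝ | ∃ P : Fin d → Finset ℕ, IsPartition P S ∧ x = ⨅ j, (P j).sum v} := by
  refine ⟨S.sum v, ?_⟩
  rintro x ⟨P, hP, rfl⟩
  haveI : Nonempty (Fin d) := ⟨⟨0, hd⟩⟩
  refine le_trans (ciInf_le (Set.Finite.bddBelow (Set.finite_range _)) ⟨0, hd⟩) ?_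
  exact Finset.sum_le_sum_of_subset_of_nonneg (partition_subset hP _)
    (fun g hg _ => hv g hg)

lemma le_MMS_of_partition {v : ℕ → ℝ} {d : ℕ} {S : Finset ℕ} (hv : ∀ g ∈ S, 0 ≤ v g)
    (hd : 0 < d) (Q : Fin d → Finset ℕ) (hQ : IsPartition Q S) (c : ℝ)
    (hc : ∀ j, c ≤ (Q j).sum v) : c ≤ MMS v d S := by
  haveI : Nonempty (Fin d) := ⟨⟨0, hd⟩⟩
  have hmem : (⨅ j, (Q j).sum v) ∈
      {x : ℝ | ∃ P : Fin d → Finset ℕ, IsPartition P S ∧ x = ⨅ j, (P j).sum v} :=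
    ⟨Q, hQ, rfl⟩
  exact le_trans (le_ciInf hc) (le_csSup (mms_set_bddAbove v d S hv hd) hmem)

lemma exists_optimal_partition (v : ℕ → ℝ) (d : ℕ) (S : Finset ℕ) (hd : 0 < d) :
    ∃ P : Fin d → Finset ℕ, IsPartition P S ∧ MMS v d S = ⨅ j, (P j).sum v := by
  have hfin : {x : ℝ | ∃ P : Fin d → Finset ℕ, IsPartition P S ∧ x = ⨅ j, (P j).sum v}.Finite := by
    have h1 : {P : Fin d → Finset ℕ | IsPartition P S}.Finite := by
      refine Set.Finite.subset (Set.Finite.pi (fun i : Fin d => S.powerset.finite_toSet)) ?_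
      intro P hP
      intro i _
      simp only [coe_powerset, Set.mem_preimage, Set.mem_powerset_iff, Finset.coe_subset]
      exact partition_subset hP i
    have : {x : ℝ | ∃ P : Fin d → Finset ℕ, IsPartition P S ∧ x = ⨅ j, (P j).sum v}
        = (fun P : Fin d → Finset ℕ => ⨅ j, (P j).sum v) '' {P | IsPartition P S} := by
      ext x; simp [eq_comm, Set.mem_image]
    rw [this]
    exact h1.image _
  have hne : {x : ℝ | ∃ P : Fin d → Finset ℕ, IsPartition P S ∧ x = ⨅ j, (P j).sum v}.Nonempty := by
    obtain ⟨P, hP⟩ := exists_partition S d hd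
    exact ⟨_, P, hP, rfl⟩
  obtain ⟨P, hP, hPx⟩ := hne.csSup_mem hfin
  exact ⟨P, hP, hPx⟩

lemma key_sum_min {ι : Type*} [DecidableEq ι] (ε : ℝ) (hε0 : 0 ≤ ε) (hε : ε ≤ 1/4)
    (g : Finset ι) (q : ι → ℕ)
    (hq : ∑ i ∈ g, (q i : ℝ) = 4 * g.card - 4) :
    ∑ i ∈ g, min 1 ((q i : ℝ) * (1/4 + ε/3)) ≤ (g.card : ℝ) - 1 + 4*ε := by
  classical
  have hγ0 : (0:ℝ) ≤ 1/4 + ε/3 := by positivity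
  set A := g.filter (fun i => 4 ≤ q i) with hA
  set B := g.filter (fun i => ¬ 4 ≤ q i) with hB
  have hsplit : ∑ i ∈ g, min 1 ((q i : ℝ) * (1/4 + ε/3))
      = ∑ i ∈ A, min 1 ((q i : ℝ) * (1/4 + ε/3)) + ∑ i ∈ B, min 1 ((q i : ℝ) * (1/4 + ε/3)) :=
    (Finset.sum_filter_add_sum_filter_not g _ _).symm
  have hAone : ∀ i ∈ A, min 1 ((q i : ℝ) * (1/4 + ε/3)) = 1 := by
    intro i hi
    have h4 : (4 : ℝ) ≤ (q i : ℝ) := by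
      exact_mod_cast (Finset.mem_filter.mp hi).2
    refine min_eq_left ?_
    nlinarith [mul_le_mul_of_nonneg_right h4 hγ0]
  have hBsmall : ∀ i ∈ B, min 1 ((q i : ℝ) * (1/4 + ε/3)) = (q i : ℝ) * (1/4 + ε/3) := by
    intro i hi
    have h3 : (q i : ℝ) ≤ 3 := by
      have := (Finset.mem_filter.mp hi).2
      exact_mod_cast Nat.lt_succ_iff.mp (Nat.lt_of_not_le this)
    refine min_eq_right ?_
    nlinarith [mul_le_mul_of_nonneg_right h3 hγ0]
  rw [hsplit, Finset.sum_congr rfl hAone, Finset.sum_congr rfl hBsmall,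
    Finset.sum_const, nsmul_eq_mul, mul_one, ← Finset.sum_mul]
  set a : ℝ := (A.card : ℝ) with ha
  set Q' : ℝ := ∑ i ∈ B, (q i : ℝ) with hQ'
  set b : ℝ := (B.card : ℝ) with hb
  have hQ'0 : 0 ≤ Q' := Finset.sum_nonneg (fun i _ => by positivity)
  have hcard : a + b = (g.card : ℝ) := by
    have := Finset.card_filter_add_card_filter_not (s := g) (p := fun i => 4 ≤ q i)
    rw [ha, hb, ← Nat.cast_add]
    exact_mod_cast congrArg (Nat.cast : ℕ → ℝ) this
  have hsumAB : ∑ i ∈ A, (q i : ℝ) + Q' = 4 * g.card - 4 := by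
    rw [hQ', ← hq]
    exact Finset.sum_filter_add_sum_filter_not g _ _
  have hAsum : 4 * a ≤ ∑ i ∈ A, (q i : ℝ) := by
    have := Finset.card_nsmul_le_sum A (fun i => (q i : ℝ)) 4
      (fun i hi => by show (4:ℝ) ≤ (q i : ℝ); exact_mod_cast (Finset.mem_filter.mp hi).2)
    rw [nsmul_eq_mul] at this
    linarith
  have hQ'B : Q' ≤ 3 * b := by
    have := Finset.sum_le_card_nsmul B (fun i => (q i : ℝ)) 3
      (fun i hi => by
        have h := (Finset.mem_filter.mp hi).2
        show (q i : ℝ) ≤ 3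
        exact_mod_cast Nat.lt_succ_iff.mp (Nat.lt_of_not_le h))
    rw [nsmul_eq_mul] at this
    linarith
  have hb0 : 0 ≤ b := by rw [hb]; positivity
  rcases le_or_gt 4 b with h4b | h4b
  · have h1 : Q' * (1/4 + ε/3) ≤ 3 * b * (1/4 + ε/3) :=
      mul_le_mul_of_nonneg_right hQ'B hγ0
    nlinarith [mul_nonneg (by linarith : (0:ℝ) ≤ b - 4) (by linarith : (0:ℝ) ≤ 1/4 - ε)]
  · have hb3 : b ≤ 3 := by
      rw [hb]
      have h4 : (B.card : ℝ) < 4 := h4b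
      have : B.card < 4 := by exact_mod_cast h4
      exact_mod_cast Nat.lt_succ_iff.mp this
    have hQ9 : Q' ≤ 9 := by linarith
    have h2 : Q' * ε ≤ 9 * ε := mul_le_mul_of_nonneg_right hQ9 hε0
    nlinarith

lemma grouping_card {ι : Type*} [Fintype ι] [DecidableEq ι] (S : Finset (Finset ι))
    (h : ι → ℕ) (r : ℕ) (hh : ∑ i, h i = r)
    (hdisj : ∀ g₁ ∈ S, ∀ g₂ ∈ S, g₁ ≠ g₂ → Disjoint g₁ g₂)
    (hunion : S.biUnion id = Finset.univ)
    (hsum : ∀ g ∈ S, (∑ i ∈ g, h i) + 1 = g.card) :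
    r + S.card = Fintype.card ι := by
  classical
  have hpd : (S : Set (Finset ι)).PairwiseDisjoint (id : Finset ι → Finset ι) := by
    intro a ha b hb hab
    exact hdisj a ha b hb hab
  have hcards : ∑ g ∈ S, g.card = Fintype.card ι := by
    have := Finset.card_biUnion (s := S) (t := id) hdisj
    rw [hunion, Finset.card_univ] at this
    simpa using this.symm
  have hsum2 : ∑ g ∈ S, ∑ i ∈ g, h i = r := by
    have := Finset.sum_biUnion (s := S) (t := id) (f := h) hpd
    rw [hunion] at this
    simpa [hh] using this.symm
  have : ∑ g ∈ S, ((∑ i ∈ g, h i) + 1) = ∑ g ∈ S, g.card :=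
    Finset.sum_congr rfl (fun g hg => hsum g hg)
  rw [Finset.sum_add_distrib, Finset.sum_const, smul_eq_mul, mul_one, hsum2, hcards] at this
  omega

lemma grouping {ι : Type*} [Fintype ι] [DecidableEq ι] :
    ∀ (r : ℕ) (h l : ι → ℕ), r < Fintype.card ι → (∑ i, h i) = r → (∑ i, l i) = r →
    ∃ S : Finset (Finset ι),
      (∀ g ∈ S, g.Nonempty) ∧
      (∀ g₁ ∈ S, ∀ g₂ ∈ S, g₁ ≠ g₂ → Disjoint g₁ g₂) ∧
      S.biUnion id = Finset.univ ∧
      (∀ g ∈ S, (∑ i ∈ g, h i) + 1 = g.card ∧ (∑ i ∈ g, l i) + 1 = g.card) := by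
  classical
  intro r
  induction r with
  | zero =>
    intro h l hr hh hl
    refine ⟨Finset.univ.image (fun i => {i}), ?_, ?_, ?_, ?_⟩
    · intro g hg
      obtain ⟨i, _, rfl⟩ := Finset.mem_image.mp hg
      exact ⟨i, Finset.mem_singleton_self i⟩
    · intro g₁ hg₁ g₂ hg₂ hne
      obtain ⟨i, _, rfl⟩ := Finset.mem_image.mp hg₁
      obtain ⟨j, _, rfl⟩ := Finset.mem_image.mp hg₂
      simp only [Finset.disjoint_singleton_left, Finset.mem_singleton]
      intro hij; exact hne (by rw [hij])
    · ext x
      simp only [Finset.mem_biUnion, Finset.mem_image, Finset.mem_univ, true_and, id_eq,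
        iff_true]
      exact ⟨{x}, ⟨x, rfl⟩, Finset.mem_singleton_self x⟩
    · intro g hg
      obtain ⟨i, _, rfl⟩ := Finset.mem_image.mp hg
      have hh0 : h i = 0 := by
        have := Finset.sum_eq_zero_iff.mp hh i (mem_univ i)
        exact this
      have hl0 : l i = 0 := Finset.sum_eq_zero_iff.mp hl i (mem_univ i)
      simp [hh0, hl0]
  | succ r ih =>
    intro h l hr hh hl
    -- find i0 with h i0 ≥ 1, i1 with l i1 ≥ 1
    obtain ⟨i0, -, hi0⟩ := Finset.exists_ne_zero_of_sum_ne_zero (by rw [hh]; omega :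
      ∑ i, h i ≠ 0)
    obtain ⟨i1, -, hi1⟩ := Finset.exists_ne_zero_of_sum_ne_zero (by rw [hl]; omega :
      ∑ i, l i ≠ 0)
    set h' := Function.update h i0 (h i0 - 1) with hh'def
    set l' := Function.update l i1 (l i1 - 1) with hl'def
    have hsum_h' : ∑ i, h' i = r := by
      rw [hh'def, Finset.sum_update_of_mem (mem_univ i0)]
      have := Finset.add_sum_erase Finset.univ h (mem_univ i0)
      rw [← Finset.erase_eq]
      omega
    have hsum_l' : ∑ i, l' i = r := by
      rw [hl'def, Finset.sum_update_of_mem (mem_univ i1)]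
      have := Finset.add_sum_erase Finset.univ l (mem_univ i1)
      rw [← Finset.erase_eq]
      omega
    obtain ⟨S, hne, hdisj, hunion, hsum⟩ := ih h' l' (by omega) hsum_h' hsum_l'
    -- locate groups
    have hi0mem : i0 ∈ S.biUnion id := by rw [hunion]; exact mem_univ i0
    obtain ⟨g0, hg0S, hi0g0⟩ := Finset.mem_biUnion.mp hi0mem
    have hi1mem : i1 ∈ S.biUnion id := by rw [hunion]; exact mem_univ i1
    obtain ⟨g1, hg1S, hi1g1⟩ := Finset.mem_biUnion.mp hi1mem
    -- S has at least 2 elements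
    have hScard : r + S.card = Fintype.card ι :=
      grouping_card S h' r hsum_h' hdisj hunion (fun g hg => (hsum g hg).1)
    have hS2 : 2 ≤ S.card := by omega
    have hg2ex : ((S.erase g0)).Nonempty := by
      rw [← Finset.card_pos, Finset.card_erase_of_mem hg0S]
      omega
    obtain ⟨g2, hg2⟩ := hg2ex
    have hg2S : g2 ∈ S := Finset.mem_of_mem_erase hg2
    have hg2ne : g2 ≠ g0 := Finset.ne_of_mem_erase hg2
    set gb := if g0 = g1 then g2 else g1 with hgbdef
    have hgbS : gb ∈ S := by
      rw [hgbdef]; split <;> assumption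
    have hgbne : g0 ≠ gb := by
      rw [hgbdef]; split
      · exact fun hc => hg2ne hc.symm
      · next hne01 => exact hne01
    have hi1u : i1 ∈ g0 ∪ gb := by
      rw [hgbdef]
      by_cases hc : g0 = g1
      · simp only [if_pos hc, Finset.mem_union]
        exact Or.inl (hc ▸ hi1g1)
      · simp only [if_neg hc, Finset.mem_union]
        exact Or.inr hi1g1
    have hd0b : Disjoint g0 gb := hdisj g0 hg0S gb hgbS hgbne
    set u := g0 ∪ gb with hudef
    have hi0u : i0 ∈ u := Finset.mem_union_left _ hi0g0
    set S' := insert u ((S.erase g0).erase gb) with hS'def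
    -- membership characterization
    have hmem' : ∀ g, g ∈ S' ↔ g = u ∨ (g ∈ S ∧ g ≠ gb ∧ g ≠ g0) := by
      intro g
      simp only [hS'def, Finset.mem_insert, Finset.mem_erase]
      tauto
    -- other groups avoid i0 and i1
    have havoid : ∀ g ∈ S, g ≠ g0 → g ≠ gb → i0 ∉ g ∧ i1 ∉ g := by
      intro g hgS hne0 hneb
      constructor
      · intro hc
        exact (Finset.disjoint_left.mp (hdisj g hgS g0 hg0S hne0)) hc hi0g0
      · intro hc
        rcases Finset.mem_union.mp hi1u with h1 | h1
        · exact (Finset.disjoint_left.mp (hdisj g hgS g0 hg0S hne0)) hc h1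
        · exact (Finset.disjoint_left.mp (hdisj g hgS gb hgbS hneb)) hc h1
    -- sums over unaffected groups
    have hsum_eq : ∀ g ∈ S, g ≠ g0 → g ≠ gb →
        (∑ i ∈ g, h i = ∑ i ∈ g, h' i) ∧ (∑ i ∈ g, l i = ∑ i ∈ g, l' i) := by
      intro g hgS hne0 hneb
      obtain ⟨hi0n, hi1n⟩ := havoid g hgS hne0 hneb
      constructor
      · refine Finset.sum_congr rfl (fun i hi => ?_)
        exact (Function.update_of_ne (fun hc : i = i0 => hi0n (hc ▸ hi)) _ h).symm
      · refine Finset.sum_congr rfl (fun i hi => ?_)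
        exact (Function.update_of_ne (fun hc : i = i1 => hi1n (hc ▸ hi)) _ l).symm
    -- sums over u
    have hcardu : u.card = g0.card + gb.card := Finset.card_union_of_disjoint hd0b
    have hsumu_h' : ∑ i ∈ u, h' i = ∑ i ∈ g0, h' i + ∑ i ∈ gb, h' i :=
      Finset.sum_union hd0b
    have hsumu_l' : ∑ i ∈ u, l' i = ∑ i ∈ g0, l' i + ∑ i ∈ gb, l' i :=
      Finset.sum_union hd0b
    have hhu : ∑ i ∈ u, h i = (∑ i ∈ u, h' i) + 1 := by
      have e1 : ∑ i ∈ u.erase i0, h i = ∑ i ∈ u.erase i0, h' i :=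
        Finset.sum_congr rfl (fun i hi => by
          rw [hh'def, Function.update_of_ne (Finset.ne_of_mem_erase hi) _ h])
      have e2 := Finset.add_sum_erase u h hi0u
      have e3 := Finset.add_sum_erase u h' hi0u
      have e4 : h' i0 = h i0 - 1 := by rw [hh'def, Function.update_self]
      omega
    have hlu : ∑ i ∈ u, l i = (∑ i ∈ u, l' i) + 1 := by
      have e1 : ∑ i ∈ u.erase i1, l i = ∑ i ∈ u.erase i1, l' i :=
        Finset.sum_congr rfl (fun i hi => by
          rw [hl'def, Function.update_of_ne (Finset.ne_of_mem_erase hi) _ l])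
      have e2 := Finset.add_sum_erase u l hi1u
      have e3 := Finset.add_sum_erase u l' hi1u
      have e4 : l' i1 = l i1 - 1 := by rw [hl'def, Function.update_self]
      omega
    refine ⟨S', ?_, ?_, ?_, ?_⟩
    · -- nonempty
      intro g hg
      rcases (hmem' g).mp hg with rfl | ⟨hgS, -, -⟩
      · exact (hne g0 hg0S).mono (Finset.subset_union_left)
      · exact hne g hgS
    · -- disjoint
      intro ga hga gc hgc hnegac
      rcases (hmem' ga).mp hga with rfl | ⟨hgaS, hganeb, hgane0⟩ <;>
        rcases (hmem' gc).mp hgc with rfl | ⟨hgcS, hgcneb, hgcne0⟩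
      · exact absurd rfl hnegac
      · rw [Finset.disjoint_union_left]
        exact ⟨hdisj g0 hg0S gc hgcS (Ne.symm hgcne0), hdisj gb hgbS gc hgcS (Ne.symm hgcneb)⟩
      · rw [Finset.disjoint_union_right]
        exact ⟨hdisj ga hgaS g0 hg0S hgane0, hdisj ga hgaS gb hgbS hganeb⟩
      · exact hdisj ga hgaS gc hgcS hnegac
    · -- union
      apply Finset.eq_univ_of_forall
      intro x
      have hx : x ∈ S.biUnion id := by rw [hunion]; exact mem_univ x
      obtain ⟨g, hgS, hxg⟩ := Finset.mem_biUnion.mp hx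
      rw [Finset.mem_biUnion]
      by_cases hc0 : g = g0
      · exact ⟨u, (hmem' u).mpr (Or.inl rfl), Finset.mem_union_left _ (hc0 ▸ hxg)⟩
      · by_cases hcb : g = gb
        · exact ⟨u, (hmem' u).mpr (Or.inl rfl), Finset.mem_union_right _ (hcb ▸ hxg)⟩
        · exact ⟨g, (hmem' g).mpr (Or.inr ⟨hgS, hcb, hc0⟩), hxg⟩
    · -- sums
      intro g hg
      rcases (hmem' g).mp hg with rfl | ⟨hgS, hgneb, hgne0⟩
      · have p0 := hsum g0 hg0S
        have pb := hsum gb hgbS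
        constructor
        · rw [hhu, hsumu_h']; omega
        · rw [hlu, hsumu_l']; omega
      · obtain ⟨eh, el⟩ := hsum_eq g hgS hgne0 hgneb
        have := hsum g hgS
        rw [eh, el]
        exact this

/-- MMS loss from r applications of rule R₄, each removing a heavy good
of value < 3/4+ε and a light good of value < 1/4+ε/3. -/
theorem R4_sequence_MMS_loss
    (M : Finset ℕ) (v : ℕ → ℝ) (hnn : ∀ g ∈ M, 0 ≤ v g)
    (ε : ℝ) (hε : 0 ≤ ε) (n r : ℕ) (hrn : r < n)
    (hmms : 1 ≤ MMS v n M)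
    (H L : Finset ℕ) (hHM : H ⊆ M) (hLM : L ⊆ M) (hHL : Disjoint H L)
    (hHcard : H.card = r) (hLcard : L.card = r)
    (hHv : ∀ h ∈ H, v h < 3/4 + ε) (hLv : ∀ g ∈ L, v g < 1/4 + ε/3) :
    1 - 4*ε ≤ MMS v (n - r) (M \ (H ∪ L)) := by
  classical
  have hnr : 0 < n - r := by omega
  set R := H ∪ L with hRdef
  have hRM : R ⊆ M := Finset.union_subset hHM hLM
  have hnnR : ∀ g ∈ M \ R, 0 ≤ v g := fun g hg => hnn g (Finset.mem_sdiff.mp hg).1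
  rcases le_or_gt ε (1/4) with hε14 | hε14
  swap
  · -- trivial case: 1 - 4ε < 0
    obtain ⟨Q, hQ⟩ := exists_partition (M \ R) (n - r) hnr
    refine le_MMS_of_partition hnnR hnr Q hQ _ (fun j => ?_)
    have h0 : 0 ≤ (Q j).sum v :=
      Finset.sum_nonneg (fun g hg => hnnR g (partition_subset hQ j hg))
    linarith
  -- main case
  obtain ⟨P, hP, hPopt⟩ := exists_optimal_partition v n M (by omega)
  haveI : Nonempty (Fin n) := ⟨⟨0, by omega⟩⟩
  have hbund : ∀ i, 1 ≤ (P i).sum v := by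
    intro i
    have h1 : (⨅ j, (P j).sum v) ≤ (P i).sum v :=
      ciInf_le (Set.Finite.bddBelow (Set.finite_range _)) i
    rw [← hPopt] at h1
    linarith
  set hcnt : Fin n → ℕ := fun i => (P i ∩ H).card with hhcnt
  set lcnt : Fin n → ℕ := fun i => (P i ∩ L).card with hlcnt
  have hcount : ∀ (T : Finset ℕ), T ⊆ M → ∑ i, (P i ∩ T).card = T.card := by
    intro T hTM
    have hun : Finset.univ.biUnion (fun i => P i ∩ T) = T := by
      ext x
      simp only [Finset.mem_biUnion, Finset.mem_univ, true_and, Finset.mem_inter]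
      constructor
      · rintro ⟨i, -, hx⟩; exact hx
      · intro hx
        have hxM : x ∈ M := hTM hx
        rw [← hP.2] at hxM
        obtain ⟨i, -, hxi⟩ := Finset.mem_biUnion.mp hxM
        exact ⟨i, hxi, hx⟩
    have hd : ∀ i : Fin n, i ∈ Finset.univ → ∀ j : Fin n, j ∈ Finset.univ → i ≠ j →
        Disjoint (P i ∩ T) (P j ∩ T) := by
      intro i _ j _ hij
      exact (hP.1 i j hij).mono Finset.inter_subset_left Finset.inter_subset_left
    rw [← Finset.card_biUnion hd, hun]
  have hsumH : ∑ i, hcnt i = r := by rw [hhcnt]; simp only; rw [hcount H hHM, hHcard]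
  have hsumL : ∑ i, lcnt i = r := by rw [hlcnt]; simp only; rw [hcount L hLM, hLcard]
  obtain ⟨S, hSne, hSdisj, hSunion, hSsum⟩ :=
    grouping r hcnt lcnt (by simpa using hrn) hsumH hsumL
  have hScard0 : r + S.card = n := by
    have := grouping_card S hcnt r hsumH hSdisj hSunion (fun g hg => (hSsum g hg).1)
    simpa using this
  have hScard : S.card = n - r := by omega
  have e : Fin (n - r) ≃ {g // g ∈ S} := (Fintype.equivFinOfCardEq (by simp [hScard])).symm
  set Gp : Fin (n - r) → Finset (Fin n) := fun j => (e j : Finset (Fin n)) with hGp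
  have hGpS : ∀ j, Gp j ∈ S := fun j => (e j).2
  have hGpinj : ∀ j j', j ≠ j' → Gp j ≠ Gp j' := by
    intro j j' hjj' hc
    exact hjj' (e.injective (Subtype.ext hc))
  set Q : Fin (n - r) → Finset ℕ := fun j => (Gp j).biUnion (fun i => P i \ R) with hQdef
  have hQpart : IsPartition Q (M \ R) := by
    constructor
    · intro j j' hjj'
      rw [Finset.disjoint_left]
      intro x hx hx'
      obtain ⟨i, hi, hxi⟩ := Finset.mem_biUnion.mp hx
      obtain ⟨i', hi', hxi'⟩ := Finset.mem_biUnion.mp hx'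
      have hii' : i ≠ i' := by
        intro hc
        subst hc
        exact (Finset.disjoint_left.mp
          (hSdisj _ (hGpS j) _ (hGpS j') (hGpinj j j' hjj'))) hi hi'
      exact (Finset.disjoint_left.mp (hP.1 i i' hii'))
        (Finset.mem_sdiff.mp hxi).1 (Finset.mem_sdiff.mp hxi').1
    · ext x
      simp only [Finset.mem_biUnion, Finset.mem_univ, true_and]
      constructor
      · rintro ⟨j, hj⟩
        obtain ⟨i, -, hxi⟩ := Finset.mem_biUnion.mp hj
        obtain ⟨hxPi, hxR⟩ := Finset.mem_sdiff.mp hxi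
        refine Finset.mem_sdiff.mpr ⟨?_, hxR⟩
        rw [← hP.2]
        exact Finset.mem_biUnion.mpr ⟨i, Finset.mem_univ i, hxPi⟩
      · intro hx
        obtain ⟨hxM, hxR⟩ := Finset.mem_sdiff.mp hx
        rw [← hP.2] at hxM
        obtain ⟨i, -, hxi⟩ := Finset.mem_biUnion.mp hxM
        have hiu : i ∈ S.biUnion id := by rw [hSunion]; exact Finset.mem_univ i
        obtain ⟨g, hgS, hig⟩ := Finset.mem_biUnion.mp hiu
        refine ⟨e.symm ⟨g, hgS⟩, Finset.mem_biUnion.mpr ⟨i, ?_, Finset.mem_sdiff.mpr ⟨hxi, hxR⟩⟩⟩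
        show i ∈ (e (e.symm ⟨g, hgS⟩) : Finset (Fin n))
        rw [Equiv.apply_symm_apply]
        exact hig
  refine le_MMS_of_partition hnnR hnr Q hQpart _ (fun j => ?_)
  set g := Gp j with hgdef
  have hgS : g ∈ S := hGpS j
  -- sum over the group
  have hgpd : ∀ i₁ ∈ g, ∀ i₂ ∈ g, i₁ ≠ i₂ → Disjoint (P i₁ \ R) (P i₂ \ R) := by
    intro i₁ _ i₂ _ h12
    exact (hP.1 i₁ i₂ h12).mono (Finset.sdiff_subset) (Finset.sdiff_subset)
  have hQsum : (Q j).sum v = ∑ i ∈ g, (P i \ R).sum v := by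
    rw [hQdef]
    exact Finset.sum_biUnion (fun a ha b hb hab => hgpd a ha b hb hab)
  set q : Fin n → ℕ := fun i => 3 * hcnt i + lcnt i with hqdef
  have hbound : ∀ i : Fin n, 1 - min 1 ((q i : ℝ) * (1/4 + ε/3)) ≤ (P i \ R).sum v := by
    intro i
    have hsplit : ∑ x ∈ P i ∩ R, v x + ∑ x ∈ P i \ R, v x = ∑ x ∈ P i, v x :=
      Finset.sum_inter_add_sum_sdiff (P i) R v
    have hnonneg : 0 ≤ ∑ x ∈ P i \ R, v x :=
      Finset.sum_nonneg (fun x hx => hnn x (partition_subset hP i (Finset.mem_sdiff.mp hx).1))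
    have hinterHL : P i ∩ R = (P i ∩ H) ∪ (P i ∩ L) := Finset.inter_union_distrib_left _ _ _
    have hdHL : Disjoint (P i ∩ H) (P i ∩ L) :=
      hHL.mono Finset.inter_subset_right Finset.inter_subset_right
    have hsub1 : ∑ x ∈ P i ∩ H, v x ≤ (hcnt i : ℝ) * (3/4 + ε) := by
      have := Finset.sum_le_card_nsmul (P i ∩ H) v (3/4 + ε)
        (fun x hx => le_of_lt (hHv x (Finset.mem_inter.mp hx).2))
      rw [nsmul_eq_mul] at this
      exact this
    have hsub2 : ∑ x ∈ P i ∩ L, v x ≤ (lcnt i : ℝ) * (1/4 + ε/3) := by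
      have := Finset.sum_le_card_nsmul (P i ∩ L) v (1/4 + ε/3)
        (fun x hx => le_of_lt (hLv x (Finset.mem_inter.mp hx).2))
      rw [nsmul_eq_mul] at this
      exact this
    have hinter : ∑ x ∈ P i ∩ R, v x ≤ (q i : ℝ) * (1/4 + ε/3) := by
      rw [hinterHL, Finset.sum_union hdHL]
      have heq : (q i : ℝ) * (1/4 + ε/3) = (hcnt i : ℝ) * (3/4 + ε) + (lcnt i : ℝ) * (1/4 + ε/3) := by
        rw [hqdef]
        push_cast
        ring
      linarith
    have h1 : 1 ≤ ∑ x ∈ P i, v x := hbund i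
    rcases le_total 1 ((q i : ℝ) * (1/4 + ε/3)) with hm | hm
    · rw [min_eq_left hm]
      linarith
    · rw [min_eq_right hm]
      linarith
  have hgq : ∑ i ∈ g, (q i : ℝ) = 4 * g.card - 4 := by
    obtain ⟨e1, e2⟩ := hSsum g hgS
    have : ∑ i ∈ g, q i + 4 = 4 * g.card := by
      rw [hqdef]
      simp only
      rw [Finset.sum_add_distrib, ← Finset.mul_sum]
      omega
    have := congrArg (Nat.cast : ℕ → ℝ) this
    push_cast at this
    linarith
  have hkey := key_sum_min ε hε hε14 g q hgq
  have hlow : ∑ i ∈ g, (1 - min 1 ((q i : ℝ) * (1/4 + ε/3))) ≤ ∑ i ∈ g, (P i \ R).sum v :=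
    Finset.sum_le_sum (fun i _ => hbound i)
  rw [Finset.sum_sub_distrib, Finset.sum_const, nsmul_eq_mul, mul_one] at hlow
  rw [hQsum]
  linarith
end

section
/- Let v be an additive valuation on a finite set M of goods, let ε ≥ 0, and let r, k be integers with 1 ≤ r < k ≤ 2r. Let P_1, …, P_k ⊆ M be pairwise disjoint bundles with v(P_j) ≥ 1 for every j ∈ [k], and let H, L be disjoint subsets of P_1 ∪ … ∪ P_k with |H| ≤ r and |L| ≤ r, such that v(h) < 3/4 + ε for every h ∈ H and v(g) < 1/4 + ε/3 for every g ∈ L. Then MMS^{k−r}_v((P_1 ∪ … ∪ P_k) ∖ (H ∪ L)) ≥ 1 − 4ε. -/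
open Finset

def qv (a b : ℕ) : ℕ := 4 - min (3*a + b) 4

lemma qv_add (a b : ℕ) : qv a b + min (3*a + b) 4 = 4 := by unfold qv; omega
lemma qv01 : qv 0 1 = 3 := rfl
lemma qv10 : qv 1 0 = 1 := rfl
lemma qv02 : qv 0 2 = 2 := rfl
lemma qv03 : qv 0 3 = 1 := rfl

lemma sum_of_consts {ι : Type*} [DecidableEq ι] (A B : ι → ℕ) (W : Finset ι) (a0 b0 : ℕ)
    (hW : ∀ x ∈ W, A x = a0 ∧ B x = b0) :
    ∑ x ∈ W, A x = W.card * a0 ∧ ∑ x ∈ W, B x = W.card * b0 ∧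
      ∑ x ∈ W, qv (A x) (B x) = W.card * qv a0 b0 := by
  refine ⟨?_, ?_, ?_⟩
  · rw [Finset.sum_congr rfl (fun x hx => (hW x hx).1), Finset.sum_const, smul_eq_mul]
  · rw [Finset.sum_congr rfl (fun x hx => (hW x hx).2), Finset.sum_const, smul_eq_mul]
  · rw [Finset.sum_congr rfl (fun x hx => by rw [(hW x hx).1, (hW x hx).2]),
      Finset.sum_const, smul_eq_mul]

lemma filter_ite_zero {ι : Type*} [DecidableEq ι] (S Y : Finset ι) (hYS : Y ⊆ S) :
    S.filter (fun x => (if x ∈ Y then (0:ℕ) else 1) = 0) = Y := by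
  ext x
  simp only [mem_filter]
  constructor
  · rintro ⟨hxS, hxe⟩
    by_cases h : x ∈ Y
    · exact h
    · simp [h] at hxe
  · intro h
    exact ⟨hYS h, by simp [h]⟩

lemma filter_ite_one {ι : Type*} [DecidableEq ι] (S Y : Finset ι) :
    S.filter (fun x => (if x ∈ Y then (0:ℕ) else 1) = 1) = S \ Y := by
  ext x
  simp only [mem_filter, mem_sdiff]
  constructor
  · rintro ⟨hxS, hxe⟩
    by_cases h : x ∈ Y
    · simp [h] at hxe
    · exact ⟨hxS, h⟩
  · rintro ⟨hxS, h⟩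
    exact ⟨hxS, by simp [h]⟩

lemma sumq_ge {ι : Type*} [DecidableEq ι] (A B : ι → ℕ) (S : Finset ι) (r : ℕ)
    (hA : ∑ x ∈ S, A x ≤ r) (hB : ∑ x ∈ S, B x ≤ r) :
    4 * S.card ≤ (∑ x ∈ S, qv (A x) (B x)) + 4 * r := by
  have h1 : ∑ x ∈ S, (qv (A x) (B x) + min (3*A x + B x) 4) = 4 * S.card := by
    rw [Finset.sum_congr rfl (fun x _ => qv_add (A x) (B x)), Finset.sum_const]
    ring_nf
  rw [Finset.sum_add_distrib] at h1
  have h2 : ∑ x ∈ S, min (3*A x + B x) 4 ≤ 3 * (∑ x ∈ S, A x) + ∑ x ∈ S, B x := by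
    rw [Finset.mul_sum, ← Finset.sum_add_distrib]
    exact Finset.sum_le_sum (fun x _ => by omega)
  omega

lemma glue_peel {ι : Type*} [DecidableEq ι] (A B : ι → ℕ) (S G : Finset ι)
    (hGS : G ⊆ S) (r r' : ℕ)
    (hd : S.card - r = (S \ G).card - r' + 1)
    (hq4 : 4 ≤ ∑ x ∈ G, qv (A x) (B x))
    (g' : ι → ℕ) (hg'1 : ∀ x ∈ S \ G, g' x < (S \ G).card - r')
    (hg'2 : ∀ t < (S \ G).card - r',
      4 ≤ ∑ x ∈ (S \ G).filter (fun x => g' x = t), qv (A x) (B x)) :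
    ∃ g : ι → ℕ, (∀ x ∈ S, g x < S.card - r) ∧
      ∀ t < S.card - r, 4 ≤ ∑ x ∈ S.filter (fun x => g x = t), qv (A x) (B x) := by
  set d' := (S \ G).card - r' with hd'
  refine ⟨fun x => if x ∈ G then d' else g' x, ?_, ?_⟩
  · intro x hx
    by_cases hxG : x ∈ G
    · simp [hxG]; omega
    · simp only [hxG, if_neg, if_false]
      have := hg'1 x (mem_sdiff.mpr ⟨hx, hxG⟩)
      omega
  · intro t ht
    rcases Nat.lt_or_ge t d' with htd | htd
    · have heq : S.filter (fun x => (if x ∈ G then d' else g' x) = t)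
          = (S \ G).filter (fun x => g' x = t) := by
        ext x
        simp only [mem_filter, mem_sdiff]
        constructor
        · rintro ⟨hxS, hxe⟩
          by_cases hxG : x ∈ G
          · rw [if_pos hxG] at hxe; omega
          · rw [if_neg hxG] at hxe; exact ⟨⟨hxS, hxG⟩, hxe⟩
        · rintro ⟨⟨hxS, hxG⟩, hxe⟩
          exact ⟨hxS, by rw [if_neg hxG]; exact hxe⟩
      rw [heq]
      exact hg'2 t htd
    · have htd2 : t = d' := by omega
      subst htd2
      refine le_trans hq4 (Finset.sum_le_sum_of_subset ?_)
      intro x hxG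
      exact mem_filter.mpr ⟨hGS hxG, by simp [hxG]⟩

lemma lemE {ι : Type*} [DecidableEq ι] (A B : ι → ℕ) :
    ∀ (n : ℕ) (r : ℕ) (S : Finset ι), S.card ≤ n → 1 ≤ r → r < S.card → S.card ≤ 2*r →
    (∑ x ∈ S, A x) ≤ r → (∑ x ∈ S, B x) ≤ r →
    ∃ g : ι → ℕ, (∀ x ∈ S, g x < S.card - r) ∧
      ∀ t < S.card - r, 4 ≤ ∑ x ∈ S.filter (fun x => g x = t), qv (A x) (B x) := by
  intro n
  induction n with
  | zero => intro r S hn h1 h2 h3 _ _; omega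
  | succ n IH =>
    intro r S hcard hr1 hrS hS2r hA hB
    have peel : ∀ (G : Finset ι) (r' : ℕ), G ⊆ S → G.Nonempty →
        r' + G.card = r + 1 → 1 ≤ r' → r' < S.card - G.card → S.card - G.card ≤ 2 * r' →
        (∑ x ∈ S \ G, A x) ≤ r' → (∑ x ∈ S \ G, B x) ≤ r' →
        4 ≤ ∑ x ∈ G, qv (A x) (B x) →
        ∃ g : ι → ℕ, (∀ x ∈ S, g x < S.card - r) ∧
          ∀ t < S.card - r, 4 ≤ ∑ x ∈ S.filter (fun x => g x = t), qv (A x) (B x) := by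
      intro G r' hGS hGne hr' hr'1 hr'lt hr'2 hA' hB' hq4
      have hGcard : 1 ≤ G.card := Finset.card_pos.mpr hGne
      have hGle : G.card ≤ S.card := Finset.card_le_card hGS
      have hsd : (S \ G).card = S.card - G.card := Finset.card_sdiff_of_subset hGS
      obtain ⟨g', hg'1, hg'2⟩ := IH r' (S \ G) (by omega) hr'1 (by omega) (by omega) hA' hB'
      exact glue_peel A B S G hGS r r' (by omega) hq4 g' hg'1 hg'2
    by_cases hd1 : S.card = r + 1
    · refine ⟨fun _ => 0, ?_, ?_⟩
      · intro x hx
        show (0:ℕ) < S.card - r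
        omega
      · intro t ht
        have ht0 : t = 0 := by omega
        subst ht0
        have hfil : S.filter (fun _ => (0:ℕ) = 0) = S := by simp
        have := sumq_ge A B S r hA hB
        rw [hfil]
        omega
    · -- d ≥ 2
      have hd2 : r + 2 ≤ S.card := by omega
      have hr2 : 2 ≤ r := by omega
      by_cases hU : ∃ x ∈ S, A x = 0 ∧ B x = 0
      · obtain ⟨x, hxS, hAx, hBx⟩ := hU
        have hxSs : ({x} : Finset ι) ⊆ S := Finset.singleton_subset_iff.mpr hxS
        have hsdA : ∑ z ∈ S \ {x}, A z + ∑ z ∈ {x}, A z = ∑ z ∈ S, A z :=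
          Finset.sum_sdiff hxSs
        have hsdB : ∑ z ∈ S \ {x}, B z + ∑ z ∈ {x}, B z = ∑ z ∈ S, B z :=
          Finset.sum_sdiff hxSs
        simp only [Finset.sum_singleton] at hsdA hsdB
        apply peel {x} r hxSs ⟨x, Finset.mem_singleton_self x⟩
        · simp
        · omega
        · simp; omega
        · simp; omega
        · omega
        · omega
        · simp [hAx, hBx, qv]
      · push_neg at hU
        have htouch : ∀ x ∈ S, 1 ≤ A x + B x := by
          intro x hx
          have := hU x hx
          omega
        by_cases hL1 : ∃ y ∈ S, A y = 0 ∧ B y = 1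
        · by_cases hH1 : ∃ x ∈ S, A x = 1 ∧ B x = 0
          · -- 3a : peel one heavy single + one light single
            obtain ⟨x, hxS, hAx, hBx⟩ := hH1
            obtain ⟨y, hyS, hAy, hBy⟩ := hL1
            have hxy : x ≠ y := fun h => by rw [h, hAy] at hAx; omega
            have hynx : y ∉ ({x} : Finset ι) := by simp [Ne.symm hxy]
            have hGS : ({y, x} : Finset ι) ⊆ S := by
              intro z hz
              rcases mem_insert.mp hz with rfl | hz
              · exact hyS
              · rw [mem_singleton.mp hz]; exact hxS
            have hGcard : ({y, x} : Finset ι).card = 2 := by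
              rw [card_insert_of_notMem hynx, card_singleton]
            have hsdA : ∑ x ∈ S \ ({y, x} : Finset ι), A x + ∑ x ∈ ({y, x} : Finset ι), A x = ∑ x ∈ S, A x :=
              Finset.sum_sdiff hGS
            have hsdB : ∑ x ∈ S \ ({y, x} : Finset ι), B x + ∑ x ∈ ({y, x} : Finset ι), B x = ∑ x ∈ S, B x :=
              Finset.sum_sdiff hGS
            have hGA : ∑ z ∈ ({y, x} : Finset ι), A z = 1 := by
              rw [Finset.sum_insert hynx, Finset.sum_singleton, hAx, hAy]
            have hGB : ∑ z ∈ ({y, x} : Finset ι), B z = 1 := by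
              rw [Finset.sum_insert hynx, Finset.sum_singleton, hBx, hBy]
            have hGq : ∑ z ∈ ({y, x} : Finset ι), qv (A z) (B z) = 4 := by
              rw [Finset.sum_insert hynx, Finset.sum_singleton, hAx, hBx, hAy, hBy]
              decide
            refine peel {y, x} (r-1) hGS ⟨y, mem_insert_self y _⟩ ?_ ?_ ?_ ?_ ?_ ?_ ?_
            · rw [hGcard]; omega
            · omega
            · rw [hGcard]; omega
            · rw [hGcard]; omega
            · omega
            · omega
            · rw [hGq]
          · -- 3c : light singles exist, no heavy singles
            set SL := S.filter (fun x => A x = 0 ∧ B x = 1) with hSLdef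
            have hSLsub : SL ⊆ S := filter_subset _ _
            have hSLprop : ∀ x ∈ SL, A x = 0 ∧ B x = 1 := fun x hx => (mem_filter.mp hx).2
            have hsplit : ∑ x ∈ S \ SL, (A x + B x) + ∑ x ∈ SL, (A x + B x)
                = ∑ x ∈ S, (A x + B x) := Finset.sum_sdiff hSLsub
            have h1 : ∑ x ∈ SL, (A x + B x) = SL.card := by
              rw [Finset.sum_congr rfl
                (fun x hx => by rw [(hSLprop x hx).1, (hSLprop x hx).2])]
              simp
            have h2 : ∀ x ∈ S \ SL, 2 ≤ A x + B x := by
              intro x hx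
              obtain ⟨hxS, hxSL⟩ := mem_sdiff.mp hx
              have ht := htouch x hxS
              have hh : ¬(A x = 1 ∧ B x = 0) := fun hc => hH1 ⟨x, hxS, hc⟩
              have hnL : ¬(A x = 0 ∧ B x = 1) := fun hc => hxSL (mem_filter.mpr ⟨hxS, hc⟩)
              omega
            have h3 : (S \ SL).card * 2 ≤ ∑ x ∈ S \ SL, (A x + B x) := by
              have h := Finset.card_nsmul_le_sum (S \ SL) (fun x => A x + B x) 2 h2
              rw [smul_eq_mul] at h
              exact h
            have h4 : ∑ x ∈ S, (A x + B x) ≤ 2 * r := by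
              rw [Finset.sum_add_distrib]; omega
            have hcSL : SL.card ≤ S.card := card_le_card hSLsub
            have hsdc : (S \ SL).card = S.card - SL.card := card_sdiff_of_subset hSLsub
            have hF2 : 2 * S.card ≤ 2*r + SL.card := by omega
            have hSLB : SL.card ≤ ∑ x ∈ S, B x := by
              have h5 : ∑ x ∈ SL, B x = SL.card := by
                rw [Finset.sum_congr rfl (fun x hx => (hSLprop x hx).2)]; simp
              have h6 : ∑ x ∈ SL, B x ≤ ∑ x ∈ S, B x :=
                Finset.sum_le_sum_of_subset hSLsub
              omega
            have hSL4 : 4 ≤ SL.card := by omega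
            have hkd : 2 * S.card ≤ 3 * r := by omega
            by_cases hd3 : S.card = r + 2
            · -- two bins directly
              obtain ⟨Y, hYsub, hYcard⟩ :=
                Finset.exists_subset_card_eq (show 2 ≤ SL.card by omega)
              have hYS : Y ⊆ S := hYsub.trans hSLsub
              have hYprop : ∀ x ∈ Y, A x = 0 ∧ B x = 1 := fun x hx => hSLprop x (hYsub hx)
              obtain ⟨-, -, hYq⟩ := sum_of_consts A B Y 0 1 hYprop
              refine ⟨fun x => if x ∈ Y then 0 else 1, ?_, ?_⟩
              · intro x hx
                show (if x ∈ Y then (0:ℕ) else 1) < S.card - r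
                by_cases h : x ∈ Y <;> simp [h] <;> omega
              · intro t ht
                have ht2 : t < 2 := by omega
                interval_cases t
                · show 4 ≤ ∑ x ∈ S.filter (fun x => (if x ∈ Y then (0:ℕ) else 1) = 0),
                    qv (A x) (B x)
                  rw [filter_ite_zero S Y hYS, hYq, hYcard, qv01]
                  omega
                · show 4 ≤ ∑ x ∈ S.filter (fun x => (if x ∈ Y then (0:ℕ) else 1) = 1),
                    qv (A x) (B x)
                  rw [filter_ite_one S Y]
                  have hsub2 : SL \ Y ⊆ S \ Y := sdiff_subset_sdiff hSLsub (subset_refl Y)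
                  have h7 : ∑ x ∈ SL \ Y, qv (A x) (B x) ≤ ∑ x ∈ S \ Y, qv (A x) (B x) :=
                    Finset.sum_le_sum_of_subset hsub2
                  have hprop2 : ∀ x ∈ SL \ Y, A x = 0 ∧ B x = 1 :=
                    fun x hx => hSLprop x (mem_sdiff.mp hx).1
                  obtain ⟨-, -, h8⟩ := sum_of_consts A B (SL \ Y) 0 1 hprop2
                  have h9 : (SL \ Y).card = SL.card - 2 := by rw [card_sdiff_of_subset hYsub, hYcard]
                  rw [h8, h9, qv01] at h7
                  omega
            · -- d ≥ 3
              have hd3' : r + 3 ≤ S.card := by omega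
              have hr6 : 6 ≤ r := by omega
              obtain ⟨Y, hYsub, hYcard⟩ :=
                Finset.exists_subset_card_eq (show 2 ≤ SL.card by omega)
              have hYS : Y ⊆ S := hYsub.trans hSLsub
              have hYne : Y.Nonempty := Finset.card_pos.mp (by omega)
              have hYprop : ∀ x ∈ Y, A x = 0 ∧ B x = 1 := fun x hx => hSLprop x (hYsub hx)
              obtain ⟨hYA, hYB, hYq⟩ := sum_of_consts A B Y 0 1 hYprop
              rw [hYcard] at hYA hYB hYq
              rw [qv01] at hYq
              by_cases hc1 : ∑ x ∈ S, A x ≤ r - 1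
              · have hsdA : ∑ x ∈ S \ Y, A x + ∑ x ∈ Y, A x = ∑ x ∈ S, A x :=
                  Finset.sum_sdiff hYS
                have hsdB : ∑ x ∈ S \ Y, B x + ∑ x ∈ Y, B x = ∑ x ∈ S, B x :=
                  Finset.sum_sdiff hYS
                refine peel Y (r-1) hYS hYne ?_ ?_ ?_ ?_ ?_ ?_ ?_
                · rw [hYcard]; omega
                · omega
                · rw [hYcard]; omega
                · rw [hYcard]; omega
                · omega
                · omega
                · rw [hYq]; omega
              · by_cases hz : ∃ z ∈ S, 2 ≤ A z
                · obtain ⟨z, hzS, hz2⟩ := hz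
                  have hzY : z ∉ Y := fun h => by have := (hYprop z h).1; omega
                  have hGS : insert z Y ⊆ S := insert_subset hzS hYS
                  have hGcard : (insert z Y).card = 3 := by
                    rw [card_insert_of_notMem hzY, hYcard]
                  have hGA : 2 ≤ ∑ x ∈ insert z Y, A x := by
                    rw [Finset.sum_insert hzY, hYA]; omega
                  have hGB : 2 ≤ ∑ x ∈ insert z Y, B x := by
                    rw [Finset.sum_insert hzY, hYB]; omega
                  have hGq : 4 ≤ ∑ x ∈ insert z Y, qv (A x) (B x) := by
                    refine le_trans ?_ (Finset.sum_le_sum_of_subset (subset_insert z Y))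
                    rw [hYq]; omega
                  have hsdA : ∑ x ∈ S \ (insert z Y), A x + ∑ x ∈ (insert z Y), A x = ∑ x ∈ S, A x :=
                    Finset.sum_sdiff hGS
                  have hsdB : ∑ x ∈ S \ (insert z Y), B x + ∑ x ∈ (insert z Y), B x = ∑ x ∈ S, B x :=
                    Finset.sum_sdiff hGS
                  refine peel (insert z Y) (r-2) hGS ⟨z, mem_insert_self z Y⟩
                    ?_ ?_ ?_ ?_ ?_ ?_ hGq
                  · rw [hGcard]; omega
                  · omega
                  · rw [hGcard]; omega
                  · rw [hGcard]; omega
                  · omega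
                  · omega
                · exfalso
                  have hAll1 : ∀ x ∈ S, A x ≤ 1 := by
                    intro x hx
                    by_contra hcon
                    exact hz ⟨x, hx, by omega⟩
                  set SA := S.filter (fun x => 1 ≤ A x) with hSAdef
                  have hSAsub : SA ⊆ S := filter_subset _ _
                  have hsdA : ∑ x ∈ S \ SA, A x + ∑ x ∈ SA, A x = ∑ x ∈ S, A x :=
                    Finset.sum_sdiff hSAsub
                  have hzero : ∑ x ∈ S \ SA, A x = 0 := by
                    refine Finset.sum_eq_zero ?_
                    intro x hx
                    obtain ⟨hxS, hxSA⟩ := mem_sdiff.mp hx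
                    have hcc : ¬(1 ≤ A x) := fun hc => hxSA (mem_filter.mpr ⟨hxS, hc⟩)
                    omega
                  have hSAA : ∑ x ∈ SA, A x ≤ SA.card := by
                    have h := Finset.sum_le_card_nsmul SA A 1
                      (fun x hx => hAll1 x (hSAsub hx))
                    rw [smul_eq_mul, mul_one] at h
                    exact h
                  have hSAcard : r ≤ SA.card := by omega
                  have hdisj : Disjoint SA SL := by
                    rw [Finset.disjoint_left]
                    intro x hx1 hx2
                    have h10 := (mem_filter.mp hx1).2
                    have h11 := (hSLprop x hx2).1
                    omega
                  have hUsub : SA ∪ SL ⊆ S := union_subset hSAsub hSLsub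
                  have hBge : ∀ x ∈ SA ∪ SL, 1 ≤ B x := by
                    intro x hx
                    rcases mem_union.mp hx with hx | hx
                    · have hx1 := (mem_filter.mp hx).2
                      have hxS := hSAsub hx
                      have hh : ¬(A x = 1 ∧ B x = 0) := fun hc => hH1 ⟨x, hxS, hc⟩
                      have := hAll1 x hxS
                      omega
                    · have := (hSLprop x hx).2; omega
                  have hcard_union : (SA ∪ SL).card = SA.card + SL.card :=
                    card_union_of_disjoint hdisj
                  have hsum_union : (SA ∪ SL).card ≤ ∑ x ∈ SA ∪ SL, B x := by
                    have h := Finset.card_nsmul_le_sum (SA ∪ SL) B 1 hBge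
                    rw [smul_eq_mul, mul_one] at h
                    exact h
                  have hle : ∑ x ∈ SA ∪ SL, B x ≤ ∑ x ∈ S, B x :=
                    Finset.sum_le_sum_of_subset hUsub
                  omega
        · -- 3b : no light singles
          set SH := S.filter (fun x => A x = 1 ∧ B x = 0) with hSHdef
          have hSHsub : SH ⊆ S := filter_subset _ _
          have hSHprop : ∀ x ∈ SH, A x = 1 ∧ B x = 0 := fun x hx => (mem_filter.mp hx).2
          have hsplit : ∑ x ∈ S \ SH, (A x + B x) + ∑ x ∈ SH, (A x + B x)
              = ∑ x ∈ S, (A x + B x) := Finset.sum_sdiff hSHsub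
          have h1 : ∑ x ∈ SH, (A x + B x) = SH.card := by
            rw [Finset.sum_congr rfl
              (fun x hx => by rw [(hSHprop x hx).1, (hSHprop x hx).2])]
            simp
          have h2 : ∀ x ∈ S \ SH, 2 ≤ A x + B x := by
            intro x hx
            obtain ⟨hxS, hxSH⟩ := mem_sdiff.mp hx
            have ht := htouch x hxS
            have hh : ¬(A x = 0 ∧ B x = 1) := fun hc => hL1 ⟨x, hxS, hc⟩
            have hnH : ¬(A x = 1 ∧ B x = 0) := fun hc => hxSH (mem_filter.mpr ⟨hxS, hc⟩)
            omega
          have h3 : (S \ SH).card * 2 ≤ ∑ x ∈ S \ SH, (A x + B x) := by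
            have h := Finset.card_nsmul_le_sum (S \ SH) (fun x => A x + B x) 2 h2
            rw [smul_eq_mul] at h
            exact h
          have h4 : ∑ x ∈ S, (A x + B x) ≤ 2 * r := by
            rw [Finset.sum_add_distrib]; omega
          have hcSH : SH.card ≤ S.card := card_le_card hSHsub
          have hsdc : (S \ SH).card = S.card - SH.card := card_sdiff_of_subset hSHsub
          have hF2 : 2 * S.card ≤ 2*r + SH.card := by omega
          have hSHA : SH.card ≤ ∑ x ∈ S, A x := by
            have h5 : ∑ x ∈ SH, A x = SH.card := by
              rw [Finset.sum_congr rfl (fun x hx => (hSHprop x hx).1)]; simp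
            have h6 : ∑ x ∈ SH, A x ≤ ∑ x ∈ S, A x :=
              Finset.sum_le_sum_of_subset hSHsub
            omega
          have hSH4 : 4 ≤ SH.card := by omega
          have hkd : 2 * S.card ≤ 3 * r := by omega
          by_cases hd3 : S.card = r + 2
          · -- two bins directly : 4 heavy singles vs rest
            obtain ⟨Y, hYsub, hYcard⟩ :=
              Finset.exists_subset_card_eq (show 4 ≤ SH.card by omega)
            have hYS : Y ⊆ S := hYsub.trans hSHsub
            have hYprop : ∀ x ∈ Y, A x = 1 ∧ B x = 0 := fun x hx => hSHprop x (hYsub hx)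
            obtain ⟨-, -, hYq⟩ := sum_of_consts A B Y 1 0 hYprop
            rw [hYcard, qv10] at hYq
            have hsdq : ∑ x ∈ S \ Y, qv (A x) (B x) + ∑ x ∈ Y, qv (A x) (B x)
                = ∑ x ∈ S, qv (A x) (B x) := Finset.sum_sdiff hYS
            have htot := sumq_ge A B S r hA hB
            refine ⟨fun x => if x ∈ Y then 0 else 1, ?_, ?_⟩
            · intro x hx
              show (if x ∈ Y then (0:ℕ) else 1) < S.card - r
              by_cases h : x ∈ Y <;> simp [h] <;> omega
            · intro t ht
              have ht2 : t < 2 := by omega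
              interval_cases t
              · show 4 ≤ ∑ x ∈ S.filter (fun x => (if x ∈ Y then (0:ℕ) else 1) = 0),
                  qv (A x) (B x)
                rw [filter_ite_zero S Y hYS, hYq]
              · show 4 ≤ ∑ x ∈ S.filter (fun x => (if x ∈ Y then (0:ℕ) else 1) = 1),
                  qv (A x) (B x)
                rw [filter_ite_one S Y]
                omega
          · -- d ≥ 3
            have hd3' : r + 3 ≤ S.card := by omega
            have hSH6 : 6 ≤ SH.card := by omega
            have hr6 : 6 ≤ r := by omega
            by_cases hz2 : ∃ z ∈ S, A z = 0 ∧ B z = 2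
            · obtain ⟨z, hzS, hAz, hBz⟩ := hz2
              obtain ⟨Y, hYsub, hYcard⟩ :=
                Finset.exists_subset_card_eq (show 2 ≤ SH.card by omega)
              have hYS : Y ⊆ S := hYsub.trans hSHsub
              have hYprop : ∀ x ∈ Y, A x = 1 ∧ B x = 0 := fun x hx => hSHprop x (hYsub hx)
              obtain ⟨hYA, hYB, hYq⟩ := sum_of_consts A B Y 1 0 hYprop
              rw [hYcard] at hYA hYB hYq
              rw [qv10] at hYq
              have hzY : z ∉ Y := fun h => by have := (hYprop z h).1; omega
              have hGS : insert z Y ⊆ S := insert_subset hzS hYS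
              have hGcard : (insert z Y).card = 3 := by
                rw [card_insert_of_notMem hzY, hYcard]
              have hGA : ∑ x ∈ insert z Y, A x = 2 := by
                rw [Finset.sum_insert hzY, hYA, hAz]
              have hGB : ∑ x ∈ insert z Y, B x = 2 := by
                rw [Finset.sum_insert hzY, hYB, hBz]
              have hGq : 4 ≤ ∑ x ∈ insert z Y, qv (A x) (B x) := by
                rw [Finset.sum_insert hzY, hYq, hAz, hBz, qv02]
              have hsdA : ∑ x ∈ S \ (insert z Y), A x + ∑ x ∈ (insert z Y), A x = ∑ x ∈ S, A x :=
                Finset.sum_sdiff hGS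
              have hsdB : ∑ x ∈ S \ (insert z Y), B x + ∑ x ∈ (insert z Y), B x = ∑ x ∈ S, B x :=
                Finset.sum_sdiff hGS
              refine peel (insert z Y) (r-2) hGS ⟨z, mem_insert_self z Y⟩
                ?_ ?_ ?_ ?_ ?_ ?_ hGq
              · rw [hGcard]; omega
              · omega
              · rw [hGcard]; omega
              · rw [hGcard]; omega
              · omega
              · omega
            · by_cases hz3 : ∃ z ∈ S, A z = 0 ∧ B z = 3
              · obtain ⟨z, hzS, hAz, hBz⟩ := hz3
                obtain ⟨Y, hYsub, hYcard⟩ :=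
                  Finset.exists_subset_card_eq (show 3 ≤ SH.card by omega)
                have hYS : Y ⊆ S := hYsub.trans hSHsub
                have hYprop : ∀ x ∈ Y, A x = 1 ∧ B x = 0 := fun x hx => hSHprop x (hYsub hx)
                obtain ⟨hYA, hYB, hYq⟩ := sum_of_consts A B Y 1 0 hYprop
                rw [hYcard] at hYA hYB hYq
                rw [qv10] at hYq
                have hzY : z ∉ Y := fun h => by have := (hYprop z h).1; omega
                have hGS : insert z Y ⊆ S := insert_subset hzS hYS
                have hGcard : (insert z Y).card = 4 := by
                  rw [card_insert_of_notMem hzY, hYcard]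
                have hGA : ∑ x ∈ insert z Y, A x = 3 := by
                  rw [Finset.sum_insert hzY, hYA, hAz]
                have hGB : ∑ x ∈ insert z Y, B x = 3 := by
                  rw [Finset.sum_insert hzY, hYB, hBz]
                have hGq : 4 ≤ ∑ x ∈ insert z Y, qv (A x) (B x) := by
                  rw [Finset.sum_insert hzY, hYq, hAz, hBz, qv03]
                have hsdA : ∑ x ∈ S \ (insert z Y), A x + ∑ x ∈ (insert z Y), A x = ∑ x ∈ S, A x :=
                  Finset.sum_sdiff hGS
                have hsdB : ∑ x ∈ S \ (insert z Y), B x + ∑ x ∈ (insert z Y), B x = ∑ x ∈ S, B x :=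
                  Finset.sum_sdiff hGS
                refine peel (insert z Y) (r-3) hGS ⟨z, mem_insert_self z Y⟩
                  ?_ ?_ ?_ ?_ ?_ ?_ hGq
                · rw [hGcard]; omega
                · omega
                · rw [hGcard]; omega
                · rw [hGcard]; omega
                · omega
                · omega
              · by_cases hz4 : ∃ z ∈ S, A z = 0 ∧ 4 ≤ B z
                · obtain ⟨z, hzS, hAz, hBz⟩ := hz4
                  obtain ⟨Y, hYsub, hYcard⟩ :=
                    Finset.exists_subset_card_eq (show 4 ≤ SH.card by omega)
                  have hYS : Y ⊆ S := hYsub.trans hSHsub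
                  have hYprop : ∀ x ∈ Y, A x = 1 ∧ B x = 0 :=
                    fun x hx => hSHprop x (hYsub hx)
                  obtain ⟨hYA, hYB, hYq⟩ := sum_of_consts A B Y 1 0 hYprop
                  rw [hYcard] at hYA hYB hYq
                  rw [qv10] at hYq
                  have hzY : z ∉ Y := fun h => by have := (hYprop z h).1; omega
                  have hGS : insert z Y ⊆ S := insert_subset hzS hYS
                  have hGcard : (insert z Y).card = 5 := by
                    rw [card_insert_of_notMem hzY, hYcard]
                  have hGA : ∑ x ∈ insert z Y, A x = 4 := by
                    rw [Finset.sum_insert hzY, hYA, hAz]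
                  have hGB : 4 ≤ ∑ x ∈ insert z Y, B x := by
                    rw [Finset.sum_insert hzY, hYB]; omega
                  have hGq : 4 ≤ ∑ x ∈ insert z Y, qv (A x) (B x) := by
                    refine le_trans ?_ (Finset.sum_le_sum_of_subset (subset_insert z Y))
                    rw [hYq]
                  have hsdA : ∑ x ∈ S \ (insert z Y), A x + ∑ x ∈ (insert z Y), A x = ∑ x ∈ S, A x :=
                    Finset.sum_sdiff hGS
                  have hsdB : ∑ x ∈ S \ (insert z Y), B x + ∑ x ∈ (insert z Y), B x = ∑ x ∈ S, B x :=
                    Finset.sum_sdiff hGS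
                  refine peel (insert z Y) (r-4) hGS ⟨z, mem_insert_self z Y⟩
                    ?_ ?_ ?_ ?_ ?_ ?_ hGq
                  · rw [hGcard]; omega
                  · omega
                  · rw [hGcard]; omega
                  · rw [hGcard]; omega
                  · omega
                  · omega
                · exfalso
                  have hAll : ∀ x ∈ S, 1 ≤ A x := by
                    intro x hx
                    have ht := htouch x hx
                    by_contra hcon
                    have hAx : A x = 0 := by omega
                    have hn1 : ¬(A x = 0 ∧ B x = 1) := fun hc => hL1 ⟨x, hx, hc⟩
                    have hn2 : ¬(A x = 0 ∧ B x = 2) := fun hc => hz2 ⟨x, hx, hc⟩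
                    have hn3 : ¬(A x = 0 ∧ B x = 3) := fun hc => hz3 ⟨x, hx, hc⟩
                    have hn4 : ¬(A x = 0 ∧ 4 ≤ B x) := fun hc => hz4 ⟨x, hx, hc⟩
                    omega
                  have h : S.card ≤ ∑ x ∈ S, A x := by
                    have h0 := Finset.card_nsmul_le_sum S A 1 hAll
                    simpa using h0
                  omega

lemma qv_le_four (a b : ℕ) : qv a b ≤ 4 := Nat.sub_le _ _

lemma qv_pos_w (a b : ℕ) (h : 1 ≤ qv a b) : 3*a + b ≤ 3 ∧ qv a b = 4 - (3*a + b) := by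
  unfold qv at *
  omega

lemma lemS {ι : Type*} [DecidableEq ι] (e : ℝ) (he : 0 ≤ e) (q : ι → ℕ) (val : ι → ℝ) :
    ∀ (T : Finset ι), (∀ j ∈ T, 0 ≤ val j) →
      (∀ j ∈ T, 1 ≤ q j → q j ≤ 4 ∧ (q j : ℝ)/4 - (4 - (q j : ℝ))*e/3 ≤ val j) →
      ∀ t : ℕ, t ≤ 4 → t ≤ ∑ j ∈ T, q j → (t:ℝ)/4 - t*e ≤ ∑ j ∈ T, val j := by
  intro T
  induction T using Finset.induction_on with
  | empty =>
    intro _ _ t ht4 hts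
    simp at hts
    subst hts
    simp
  | @insert a T' ha IH =>
    intro hnn hkey t ht4 hts
    have hnn' : ∀ j ∈ T', 0 ≤ val j := fun j hj => hnn j (mem_insert_of_mem hj)
    have hkey' : ∀ j ∈ T', 1 ≤ q j → q j ≤ 4 ∧ (q j : ℝ)/4 - (4 - (q j : ℝ))*e/3 ≤ val j :=
      fun j hj => hkey j (mem_insert_of_mem hj)
    have hsumnn : 0 ≤ ∑ j ∈ T', val j := Finset.sum_nonneg hnn'
    rw [Finset.sum_insert ha] at hts ⊢
    rcases Nat.eq_zero_or_pos t with rfl | htpos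
    · simp
      have := hnn a (mem_insert_self a T')
      linarith
    rcases Nat.eq_zero_or_pos (q a) with hqa0 | hqa1
    · rw [hqa0] at hts
      simp at hts
      have := IH hnn' hkey' t ht4 hts
      have := hnn a (mem_insert_self a T')
      linarith
    obtain ⟨hqa4, hval⟩ := hkey a (mem_insert_self a T') hqa1
    by_cases hle : t ≤ q a
    · have h1 : (t:ℝ)/4 - t*e ≤ val a := by
        have h2 : (t:ℝ) ≤ (q a : ℝ) := by exact_mod_cast hle
        have h3 : (1:ℝ) ≤ t := by exact_mod_cast htpos
        have h4 : (q a : ℝ) ≤ 4 := by exact_mod_cast hqa4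
        nlinarith
      linarith
    · push_neg at hle
      have hIH := IH hnn' hkey' (t - q a) (by omega) (by omega)
      have hcast : ((t - q a : ℕ) : ℝ) = (t:ℝ) - (q a : ℝ) := by
        push_cast [Nat.cast_sub (le_of_lt hle)]
        ring
      rw [hcast] at hIH
      have h1 : (q a : ℝ)/4 - (q a : ℝ)*e ≤ val a := by
        have h3 : (1:ℝ) ≤ (q a : ℝ) := by exact_mod_cast hqa1
        nlinarith
      linarith

/-- inductive claim on disjoint bundles of value at least 1, after removing
at most r heavy and at most r light goods. -/
theorem bundles_minus_heavy_light
    (M : Finset ℕ) (v : ℕ → ℝ) (hnn : ∀ g ∈ M, 0 ≤ v g)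
    (ε : ℝ) (hε : 0 ≤ ε) (r k : ℕ) (hr : 1 ≤ r) (hrk : r < k) (hk : k ≤ 2*r)
    (P : Fin k → Finset ℕ) (hPM : ∀ j, P j ⊆ M)
    (hPdisj : ∀ i j : Fin k, i ≠ j → Disjoint (P i) (P j))
    (hPval : ∀ j, 1 ≤ (P j).sum v)
    (H L : Finset ℕ)
    (hH : H ⊆ Finset.univ.biUnion P) (hL : L ⊆ Finset.univ.biUnion P)
    (hHL : Disjoint H L) (hHcard : H.card ≤ r) (hLcard : L.card ≤ r)
    (hHv : ∀ h ∈ H, v h < 3/4 + ε) (hLv : ∀ g ∈ L, v g < 1/4 + ε/3) :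
    1 - 4*ε ≤ MMS v (k - r) (Finset.univ.biUnion P \ (H ∪ L)) := by
  classical
  set S' := Finset.univ.biUnion P \ (H ∪ L) with hS'def
  set A : Fin k → ℕ := fun j => (P j ∩ H).card with hAdef
  set B : Fin k → ℕ := fun j => (P j ∩ L).card with hBdef
  have hcardU : (Finset.univ : Finset (Fin k)).card = k := by simp
  have hXsum : ∀ (X : Finset ℕ), X ⊆ Finset.univ.biUnion P →
      ∑ j : Fin k, (P j ∩ X).card = X.card := by
    intro X hX
    have h1 : Finset.univ.biUnion (fun j => P j ∩ X) = X := by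
      ext a
      simp only [mem_biUnion, mem_inter, mem_univ, true_and]
      constructor
      · rintro ⟨j, hj1, hj2⟩; exact hj2
      · intro ha
        obtain ⟨j, -, hj⟩ := mem_biUnion.mp (hX ha)
        exact ⟨j, hj, ha⟩
    have h2 := Finset.card_biUnion (s := (Finset.univ : Finset (Fin k)))
      (t := fun j => P j ∩ X)
      (fun i _ j _ hij => (hPdisj i j hij).mono inter_subset_left inter_subset_left)
    rw [h1] at h2
    exact h2.symm
  have hAsum : ∑ j : Fin k, A j ≤ r := by
    rw [hAdef]
    rw [hXsum H hH]
    exact hHcard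
  have hBsum : ∑ j : Fin k, B j ≤ r := by
    rw [hBdef]
    rw [hXsum L hL]
    exact hLcard
  obtain ⟨g, hg1, hg2⟩ := lemE A B k r (Finset.univ : Finset (Fin k)) (le_of_eq hcardU)
    hr (by rw [hcardU]; exact hrk) (by rw [hcardU]; exact hk) hAsum hBsum
  rw [hcardU] at hg1 hg2
  have hg1' : ∀ j : Fin k, g j < k - r := fun j => hg1 j (mem_univ j)
  -- the partition
  set Q : Fin (k - r) → Finset ℕ :=
    fun t => ((Finset.univ.filter (fun j => g j = (t:ℕ))).biUnion P) \ (H ∪ L) with hQdef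
  have hQdisj : ∀ i j : Fin (k-r), i ≠ j → Disjoint (Q i) (Q j) := by
    intro i j hij
    rw [Finset.disjoint_left]
    intro a hai haj
    obtain ⟨ha1, -⟩ := mem_sdiff.mp hai
    obtain ⟨ha2, -⟩ := mem_sdiff.mp haj
    obtain ⟨j1, hj1, hj1a⟩ := mem_biUnion.mp ha1
    obtain ⟨j2, hj2, hj2a⟩ := mem_biUnion.mp ha2
    have hj1' := (mem_filter.mp hj1).2
    have hj2' := (mem_filter.mp hj2).2
    by_cases hj12 : j1 = j2
    · subst hj12
      exact hij (Fin.ext (by rw [← hj1', hj2']))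
    · exact (Finset.disjoint_left.mp (hPdisj j1 j2 hj12)) hj1a hj2a
  have hQunion : Finset.univ.biUnion Q = S' := by
    ext a
    simp only [mem_biUnion, mem_univ, true_and]
    constructor
    · rintro ⟨t, hat⟩
      obtain ⟨ha1, ha2⟩ := mem_sdiff.mp hat
      obtain ⟨j1, -, hj1a⟩ := mem_biUnion.mp ha1
      exact mem_sdiff.mpr ⟨mem_biUnion.mpr ⟨j1, mem_univ _, hj1a⟩, ha2⟩
    · intro ha
      obtain ⟨ha1, ha2⟩ := mem_sdiff.mp ha
      obtain ⟨j1, -, hj1a⟩ := mem_biUnion.mp ha1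
      refine ⟨⟨g j1, hg1' j1⟩, mem_sdiff.mpr ⟨mem_biUnion.mpr ⟨j1, ?_, hj1a⟩, ha2⟩⟩
      exact mem_filter.mpr ⟨mem_univ _, rfl⟩
  -- value of each bin
  have hbin : ∀ t : Fin (k - r), 1 - 4*ε ≤ (Q t).sum v := by
    intro t
    have hQt : Q t
        = (Finset.univ.filter (fun j => g j = (t:ℕ))).biUnion (fun j => P j \ (H ∪ L)) := by
      ext a
      simp only [hQdef, mem_sdiff, mem_biUnion, mem_filter, mem_univ, true_and]
      constructor
      · rintro ⟨⟨j1, hj1, hj1a⟩, ha2⟩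
        exact ⟨j1, hj1, hj1a, ha2⟩
      · rintro ⟨j1, hj1, hj1a, ha2⟩
        exact ⟨⟨j1, hj1, hj1a⟩, ha2⟩
    have hdisjbin : (↑(Finset.univ.filter (fun j => g j = (t:ℕ))) : Set (Fin k)).PairwiseDisjoint
        (fun j => P j \ (H ∪ L)) := by
      intro i _ j _ hij
      exact (hPdisj i j hij).mono sdiff_subset sdiff_subset
    rw [hQt, Finset.sum_biUnion hdisjbin]
    have hkey : ∀ j ∈ Finset.univ.filter (fun j => g j = (t:ℕ)),
        1 ≤ qv (A j) (B j) → qv (A j) (B j) ≤ 4 ∧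
          ((qv (A j) (B j) : ℝ))/4 - (4 - (qv (A j) (B j) : ℝ))*ε/3 ≤ (P j \ (H ∪ L)).sum v := by
      intro j _ hq1
      refine ⟨qv_le_four _ _, ?_⟩
      obtain ⟨hw3, hqe⟩ := qv_pos_w (A j) (B j) hq1
      have hsplitP : ∑ x ∈ P j \ (P j ∩ (H ∪ L)), v x + ∑ x ∈ P j ∩ (H ∪ L), v x
          = ∑ x ∈ P j, v x := Finset.sum_sdiff inter_subset_left
      have he1 : P j \ (P j ∩ (H ∪ L)) = P j \ (H ∪ L) := by
        ext a
        simp only [mem_sdiff, mem_inter]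
        tauto
      rw [he1] at hsplitP
      have he2 : P j ∩ (H ∪ L) = (P j ∩ H) ∪ (P j ∩ L) := Finset.inter_union_distrib_left _ _ _
      have hdHL : Disjoint (P j ∩ H) (P j ∩ L) :=
        hHL.mono inter_subset_right inter_subset_right
      have he3 : ∑ x ∈ P j ∩ (H ∪ L), v x
          = ∑ x ∈ P j ∩ H, v x + ∑ x ∈ P j ∩ L, v x := by
        rw [he2, Finset.sum_union hdHL]
      have hHb : ∑ x ∈ P j ∩ H, v x ≤ (A j : ℝ) * (3/4 + ε) := by
        have h := Finset.sum_le_card_nsmul (P j ∩ H) v (3/4 + ε)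
          (fun x hx => le_of_lt (hHv x (mem_inter.mp hx).2))
        rwa [nsmul_eq_mul] at h
      have hLb : ∑ x ∈ P j ∩ L, v x ≤ (B j : ℝ) * (1/4 + ε/3) := by
        have h := Finset.sum_le_card_nsmul (P j ∩ L) v (1/4 + ε/3)
          (fun x hx => le_of_lt (hLv x (mem_inter.mp hx).2))
        rwa [nsmul_eq_mul] at h
      have hv1 : 1 ≤ ∑ x ∈ P j, v x := hPval j
      have hqc : ((qv (A j) (B j) : ℝ)) = 4 - 3*(A j : ℝ) - (B j : ℝ) := by
        rw [hqe]
        have : ((4 - (3 * A j + B j) : ℕ) : ℝ) = 4 - ((3 * A j + B j : ℕ) : ℝ) :=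
          Nat.cast_sub (by omega)
        rw [this]
        push_cast
        ring
      have hgoal : ((qv (A j) (B j) : ℝ))/4 - (4 - (qv (A j) (B j) : ℝ))*ε/3
          = 1 - (A j : ℝ) * (3/4 + ε) - (B j : ℝ) * (1/4 + ε/3) := by
        rw [hqc]; ring
      rw [hgoal]
      linarith
    have hnn' : ∀ j ∈ Finset.univ.filter (fun j => g j = (t:ℕ)),
        0 ≤ (P j \ (H ∪ L)).sum v := by
      intro j _
      exact Finset.sum_nonneg (fun a ha => hnn a (hPM j (mem_sdiff.mp ha).1))
    have happ := lemS ε hε (fun j => qv (A j) (B j)) (fun j => (P j \ (H ∪ L)).sum v)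
      (Finset.univ.filter (fun j => g j = (t:ℕ))) hnn' hkey 4 (le_refl 4)
      (hg2 (t:ℕ) t.isLt)
    have : ((4:ℕ):ℝ)/4 - ((4:ℕ):ℝ)*ε = 1 - 4*ε := by norm_num
    rw [this] at happ
    exact happ
  -- conclude
  have hne : Nonempty (Fin (k - r)) := ⟨⟨0, by omega⟩⟩
  have hx0mem : (⨅ t, (Q t).sum v)
      ∈ {x : ℝ | ∃ Pp : Fin (k-r) → Finset ℕ, IsPartition Pp S' ∧ x = ⨅ j, (Pp j).sum v} :=
    ⟨Q, ⟨hQdisj, hQunion⟩, rfl⟩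
  have hx0ge : 1 - 4*ε ≤ ⨅ t, (Q t).sum v := le_ciInf hbin
  have hbdd : BddAbove {x : ℝ | ∃ Pp : Fin (k-r) → Finset ℕ,
      IsPartition Pp S' ∧ x = ⨅ j, (Pp j).sum v} := by
    refine ⟨∑ x ∈ S', max (v x) 0, ?_⟩
    rintro x ⟨Pp, hPp, rfl⟩
    have hj0 : (⨅ j, (Pp j).sum v) ≤ (Pp ⟨0, by omega⟩).sum v :=
      ciInf_le (Set.Finite.bddBelow (Set.finite_range _)) _
    refine le_trans hj0 ?_
    refine le_trans (Finset.sum_le_sum (fun i _ => le_max_left (v i) 0)) ?_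
    apply Finset.sum_le_sum_of_subset_of_nonneg
    · rw [← hPp.2]
      exact Finset.subset_biUnion_of_mem Pp (mem_univ _)
    · intro i _ _
      exact le_max_right _ _
  exact le_trans hx0ge (le_csSup hbdd hx0mem)
end

section
/- Let v be an additive valuation on a finite set M of goods, let n and k be integers with 0 ≤ k < n, and let x ≥ 0 be a real number. Let S ⊆ M with |S| = 2k be such that v(g) ≤ MMS^n_v(M)/2 + x for every g ∈ S. Then MMS^{n−k}_v(M ∖ S) ≥ MMS^n_v(M) − 2x. -/
open Finset

lemma mem_part_subset {d : ℕ} {P : Fin d → Finset ℕ} {T : Finset ℕ} (hP : IsPartition P T)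
    (j : Fin d) : P j ⊆ T := by
  intro a ha
  rw [← hP.2]
  exact Finset.mem_biUnion.2 ⟨j, Finset.mem_univ j, ha⟩

lemma partition_step {m : ℕ} {P : Fin (m+1) → Finset ℕ} {T : Finset ℕ}
    (hP : IsPartition P T) (jd jr : Fin (m+1)) (hne : jr ≠ jd) (R : Finset ℕ)
    (hR : R ⊆ P jd ∪ P jr) :
    IsPartition (fun i => if jd.succAbove i = jr then (P jr \ R) ∪ (P jd \ R)
      else P (jd.succAbove i)) (T \ R) := by
  have hinj : Function.Injective jd.succAbove := Fin.succAbove_right_injective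
  have hnd : ∀ i, jd.succAbove i ≠ jd := fun i => Fin.succAbove_ne jd i
  constructor
  · intro i i' hii
    have h1 : jd.succAbove i ≠ jd.succAbove i' := fun h => hii (hinj h)
    by_cases h2 : jd.succAbove i = jr <;> by_cases h3 : jd.succAbove i' = jr
    · exact absurd (h2.trans h3.symm) h1
    · simp only [if_pos h2, if_neg h3]
      refine Finset.disjoint_union_left.2 ⟨?_, ?_⟩
      · exact Finset.disjoint_of_subset_left (Finset.sdiff_subset)
          (hP.1 jr _ (fun h => h3 h.symm))
      · exact Finset.disjoint_of_subset_left (Finset.sdiff_subset)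
          (hP.1 jd _ (fun h => hnd i' h.symm))
    · simp only [if_neg h2, if_pos h3]
      refine Finset.disjoint_union_right.2 ⟨?_, ?_⟩
      · exact Finset.disjoint_of_subset_right (Finset.sdiff_subset)
          (hP.1 _ jr (fun h => h2 h))
      · exact Finset.disjoint_of_subset_right (Finset.sdiff_subset)
          (hP.1 _ jd (fun h => hnd i h))
    · simp only [if_neg h2, if_neg h3]
      exact hP.1 _ _ h1
  · ext a
    simp only [Finset.mem_biUnion, Finset.mem_univ, true_and, Finset.mem_sdiff]
    constructor
    · rintro ⟨i, hi⟩
      by_cases h2 : jd.succAbove i = jr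
      · rw [if_pos h2] at hi
        rcases Finset.mem_union.1 hi with h | h <;>
          exact ⟨mem_part_subset hP _ (Finset.mem_sdiff.1 h).1, (Finset.mem_sdiff.1 h).2⟩
      · rw [if_neg h2] at hi
        refine ⟨mem_part_subset hP _ hi, fun haR => ?_⟩
        rcases Finset.mem_union.1 (hR haR) with h | h
        · exact (Finset.disjoint_left.1 (hP.1 _ jd (hnd i)) hi) h
        · exact (Finset.disjoint_left.1 (hP.1 _ jr h2) hi) h
    · rintro ⟨haT, haR⟩
      have : a ∈ Finset.univ.biUnion P := hP.2.symm ▸ haT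
      obtain ⟨j, -, hj⟩ := Finset.mem_biUnion.1 this
      by_cases hjd : j = jd
      · obtain ⟨i, hi⟩ := Fin.exists_succAbove_eq hne
        refine ⟨i, ?_⟩
        rw [if_pos hi]
        exact Finset.mem_union_right _ (Finset.mem_sdiff.2 ⟨hjd ▸ hj, haR⟩)
      · obtain ⟨i, hi⟩ := Fin.exists_succAbove_eq (show j ≠ jd from hjd)
        by_cases hjr : j = jr
        · refine ⟨i, ?_⟩
          rw [if_pos (hi.trans hjr)]
          exact Finset.mem_union_left _ (Finset.mem_sdiff.2 ⟨hjr ▸ hj, haR⟩)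
        · refine ⟨i, ?_⟩
          rw [if_neg (fun h => hjr (hi.symm.trans h))]
          exact hi ▸ hj

lemma sdiff_sdiff_cancel {T S R : Finset ℕ} (hRS : R ⊆ S) : (T \ R) \ (S \ R) = T \ S := by
  ext a
  simp only [Finset.mem_sdiff]
  by_cases h : a ∈ R
  · simp [h, hRS h]
  · tauto

lemma phaseA (v : ℕ → ℝ) (b c e : ℝ) (heb : e ≤ 2*c - 2*b) :
    ∀ k m : ℕ, ∀ (T S : Finset ℕ) (P : Fin m → Finset ℕ),
    IsPartition P T → S ⊆ T → S.card = 2*k →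
    (∀ g ∈ T, 0 ≤ v g) → (∀ g ∈ S, v g ≤ b) →
    (∀ j, (P j ∩ S).card ≤ 1) →
    (∀ j, e ≤ (P j).sum v) →
    (∀ j, (P j ∩ S).Nonempty → c ≤ (P j).sum v) →
    ∃ Q : Fin (m-k) → Finset ℕ, IsPartition Q (T \ S) ∧ ∀ j, e ≤ (Q j).sum v := by
  intro k
  induction k with
  | zero =>
    intro m T S P hP hST hcard hnn hb h1 he hc
    have hS : S = ∅ := Finset.card_eq_zero.1 (by simpa using hcard)
    subst hS
    exact ⟨P, by simpa using hP, he⟩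
  | succ k ih =>
    intro m T S P hP hST hcard hnn hb h1 he hc
    -- pick two distinct goods of S
    have hS1 : S.Nonempty := Finset.card_pos.1 (by omega)
    obtain ⟨g1, hg1⟩ := hS1
    have hS2 : (S.erase g1).Nonempty := Finset.card_pos.1 (by
      rw [Finset.card_erase_of_mem hg1]; omega)
    obtain ⟨g2, hg2⟩ := hS2
    have hg2S : g2 ∈ S := Finset.mem_of_mem_erase hg2
    have hgne : g1 ≠ g2 := (Finset.ne_of_mem_erase hg2).symm
    -- bundles containing them
    have hg1T : g1 ∈ Finset.univ.biUnion P := hP.2.symm ▸ hST hg1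
    obtain ⟨j1, -, hj1⟩ := Finset.mem_biUnion.1 hg1T
    have hg2T : g2 ∈ Finset.univ.biUnion P := hP.2.symm ▸ hST hg2S
    obtain ⟨j2, -, hj2⟩ := Finset.mem_biUnion.1 hg2T
    have hjne : j1 ≠ j2 := by
      intro h
      subst h
      have := Finset.card_le_one.1 (h1 j1) g1 (Finset.mem_inter.2 ⟨hj1, hg1⟩)
        g2 (Finset.mem_inter.2 ⟨hj2, hg2S⟩)
      exact hgne this
    -- m = m'+1
    obtain ⟨m', rfl⟩ : ∃ m', m = m' + 1 := ⟨m - 1, by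
      have := j1.2; omega⟩
    set R : Finset ℕ := {g1, g2} with hRdef
    have hg1R : g1 ∈ R := by simp [hRdef]
    have hg2R : g2 ∈ R := by simp [hRdef]
    have hRS : R ⊆ S := by
      intro a ha
      rcases Finset.mem_insert.1 ha with h | h
      · exact h ▸ hg1
      · exact (Finset.mem_singleton.1 h) ▸ hg2S
    have hRsub : R ⊆ P j2 ∪ P j1 := by
      intro a ha
      rcases Finset.mem_insert.1 ha with h | h
      · exact Finset.mem_union_right _ (h ▸ hj1)
      · exact Finset.mem_union_left _ ((Finset.mem_singleton.1 h) ▸ hj2)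
    have hQ0 := partition_step hP j2 j1 hjne R hRsub
    set Q0 : Fin m' → Finset ℕ := fun i => if j2.succAbove i = j1
      then (P j1 \ R) ∪ (P j2 \ R) else P (j2.succAbove i) with hQ0def
    -- simplify the special bundle
    have hd12 : Disjoint (P j1) (P j2) := hP.1 _ _ hjne
    have hg2n1 : g2 ∉ P j1 := Finset.disjoint_left.1 hd12.symm hj2
    have hg1n2 : g1 ∉ P j2 := Finset.disjoint_left.1 hd12 hj1
    have hPe1 : P j1 \ R = (P j1).erase g1 := by
      ext a
      simp only [Finset.mem_sdiff, Finset.mem_erase, hRdef, Finset.mem_insert,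
        Finset.mem_singleton]
      constructor
      · rintro ⟨h, h2⟩; exact ⟨fun hh => h2 (Or.inl hh), h⟩
      · rintro ⟨h, h2⟩
        refine ⟨h2, ?_⟩
        rintro (rfl | rfl)
        · exact h rfl
        · exact hg2n1 h2
    have hPe2 : P j2 \ R = (P j2).erase g2 := by
      ext a
      simp only [Finset.mem_sdiff, Finset.mem_erase, hRdef, Finset.mem_insert,
        Finset.mem_singleton]
      constructor
      · rintro ⟨h, h2⟩; exact ⟨fun hh => h2 (Or.inr hh), h⟩
      · rintro ⟨h, h2⟩
        refine ⟨h2, ?_⟩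
        rintro (rfl | rfl)
        · exact hg1n2 h2
        · exact h rfl
    -- special bundle sum
    have hsum_special : e ≤ ((P j1 \ R) ∪ (P j2 \ R)).sum v := by
      have hdisj : Disjoint (P j1 \ R) (P j2 \ R) :=
        Finset.disjoint_of_subset_left Finset.sdiff_subset
          (Finset.disjoint_of_subset_right Finset.sdiff_subset hd12)
      rw [Finset.sum_union hdisj, hPe1, hPe2,
        Finset.sum_erase_eq_sub hj1, Finset.sum_erase_eq_sub hj2]
      have hc1 : c ≤ (P j1).sum v := hc j1 ⟨g1, Finset.mem_inter.2 ⟨hj1, hg1⟩⟩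
      have hc2 : c ≤ (P j2).sum v := hc j2 ⟨g2, Finset.mem_inter.2 ⟨hj2, hg2S⟩⟩
      have hb1 : v g1 ≤ b := hb g1 hg1
      have hb2 : v g2 ≤ b := hb g2 hg2S
      linarith
    -- new S
    set S' : Finset ℕ := S \ R with hS'def
    have hspecial_empty : ((P j1 \ R) ∪ (P j2 \ R)) ∩ S' = ∅ := by
      ext a
      simp only [hS'def, Finset.mem_inter, Finset.mem_union, Finset.mem_sdiff,
        Finset.notMem_empty, iff_false]
      rintro ⟨h | h, haS, haR⟩
      · have := Finset.card_le_one.1 (h1 j1) a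
          (Finset.mem_inter.2 ⟨h.1, haS⟩) g1
          (Finset.mem_inter.2 ⟨hj1, hg1⟩)
        exact haR (this ▸ hg1R)
      · have := Finset.card_le_one.1 (h1 j2) a
          (Finset.mem_inter.2 ⟨h.1, haS⟩) g2
          (Finset.mem_inter.2 ⟨hj2, hg2S⟩)
        exact haR (this ▸ hg2R)
    -- apply IH
    have hres := ih m' (T \ R) S' Q0 hQ0
      (Finset.sdiff_subset_sdiff hST (le_refl R))
      (by rw [hS'def, Finset.card_sdiff_of_subset hRS, hcard, hRdef,
            Finset.card_insert_of_notMem (by simp [hgne]), Finset.card_singleton]; omega)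
      (fun g hg => hnn g (Finset.mem_sdiff.1 hg).1)
      (fun g hg => hb g (Finset.mem_sdiff.1 hg).1)
      (by
        intro i
        by_cases h : j2.succAbove i = j1
        · rw [hQ0def]; simp only [if_pos h]
          rw [hspecial_empty]; simp
        · rw [hQ0def]; simp only [if_neg h]
          exact le_trans (Finset.card_le_card (Finset.inter_subset_inter
            (le_refl _) Finset.sdiff_subset)) (h1 _))
      (by
        intro i
        by_cases h : j2.succAbove i = j1
        · rw [hQ0def]; simp only [if_pos h]; exact hsum_special
        · rw [hQ0def]; simp only [if_neg h]; exact he _)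
      (by
        intro i hi
        by_cases h : j2.succAbove i = j1
        · rw [hQ0def] at hi ⊢; simp only [if_pos h] at hi
          rw [Finset.nonempty_iff_ne_empty] at hi
          exact absurd hspecial_empty hi
        · rw [hQ0def] at hi ⊢; simp only [if_neg h] at hi ⊢
          exact hc _ ⟨hi.choose, Finset.mem_inter.2
            ⟨(Finset.mem_inter.1 hi.choose_spec).1,
             (Finset.mem_sdiff.1 (Finset.mem_inter.1 hi.choose_spec).2).1⟩⟩)
    rw [sdiff_sdiff_cancel hRS] at hres
    rw [Nat.succ_sub_succ] at *
    exact hres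

lemma phaseB (v : ℕ → ℝ) (b c : ℝ) (hcb : c ≤ 2*b) :
    ∀ k m : ℕ, k < m → ∀ (T S : Finset ℕ) (P : Fin m → Finset ℕ),
    IsPartition P T → S ⊆ T → S.card = 2*k →
    (∀ g ∈ T, 0 ≤ v g) → (∀ g ∈ S, v g ≤ b) →
    (∀ j, c ≤ (P j).sum v) →
    ∃ Q : Fin (m-k) → Finset ℕ, IsPartition Q (T \ S) ∧ ∀ j, 2*c - 2*b ≤ (Q j).sum v := by
  intro k
  induction k with
  | zero =>
    intro m hkm T S P hP hST hcard hnn hb he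
    have hS : S = ∅ := Finset.card_eq_zero.1 (by simpa using hcard)
    subst hS
    exact ⟨P, by simpa using hP, fun j => le_trans (by linarith) (he j)⟩
  | succ k ih =>
    intro m hkm T S P hP hST hcard hnn hb he
    by_cases hex : ∃ j, 2 ≤ (P j ∩ S).card
    · obtain ⟨j1, hj1c⟩ := hex
      obtain ⟨g1, hg1, g2, hg2, hgne⟩ := Finset.one_lt_card.1 (show 1 < (P j1 ∩ S).card by omega)
      have hg1P : g1 ∈ P j1 := (Finset.mem_inter.1 hg1).1
      have hg1S : g1 ∈ S := (Finset.mem_inter.1 hg1).2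
      have hg2P : g2 ∈ P j1 := (Finset.mem_inter.1 hg2).1
      have hg2S : g2 ∈ S := (Finset.mem_inter.1 hg2).2
      obtain ⟨m', rfl⟩ : ∃ m', m = m' + 2 := ⟨m - 2, by omega⟩
      -- pick j' ≠ j1
      obtain ⟨j', hj'ne⟩ : ∃ j' : Fin (m' + 2), j' ≠ j1 := by
        by_cases h0 : j1 = 0
        · exact ⟨1, by rw [h0]; simp⟩
        · exact ⟨0, fun h => h0 h.symm⟩
      set R : Finset ℕ := {g1, g2} with hRdef
      have hRP : R ⊆ P j1 := by
        intro a ha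
        rcases Finset.mem_insert.1 ha with h | h
        · exact h ▸ hg1P
        · exact (Finset.mem_singleton.1 h) ▸ hg2P
      have hRS : R ⊆ S := by
        intro a ha
        rcases Finset.mem_insert.1 ha with h | h
        · exact h ▸ hg1S
        · exact (Finset.mem_singleton.1 h) ▸ hg2S
      have hQ0 := partition_step hP j1 j' hj'ne R (fun a ha => Finset.mem_union_left _ (hRP ha))
      set Q0 : Fin (m'+1) → Finset ℕ := fun i => if j1.succAbove i = j'
        then (P j' \ R) ∪ (P j1 \ R) else P (j1.succAbove i) with hQ0def
      have hd : Disjoint (P j') (P j1) := hP.1 _ _ hj'ne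
      have hsum_special : c ≤ ((P j' \ R) ∪ (P j1 \ R)).sum v := by
        have h1 : P j' \ R = P j' :=
          Finset.sdiff_eq_self_of_disjoint (Finset.disjoint_of_subset_right hRP hd)
        have hdisj : Disjoint (P j' \ R) (P j1 \ R) :=
          Finset.disjoint_of_subset_left Finset.sdiff_subset
            (Finset.disjoint_of_subset_right Finset.sdiff_subset hd)
        rw [Finset.sum_union hdisj, h1]
        have hpos : 0 ≤ (P j1 \ R).sum v :=
          Finset.sum_nonneg fun g hg =>
            hnn g (mem_part_subset hP j1 (Finset.mem_sdiff.1 hg).1)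
        linarith [he j']
      have hres := ih (m'+1) (by omega) (T \ R) (S \ R) Q0 hQ0
        (Finset.sdiff_subset_sdiff hST (le_refl R))
        (by rw [Finset.card_sdiff_of_subset hRS, hcard, hRdef,
              Finset.card_insert_of_notMem (by simp [hgne]), Finset.card_singleton]; omega)
        (fun g hg => hnn g (Finset.mem_sdiff.1 hg).1)
        (fun g hg => hb g (Finset.mem_sdiff.1 hg).1)
        (by
          intro i
          by_cases h : j1.succAbove i = j'
          · rw [hQ0def]; simp only [if_pos h]; exact hsum_special
          · rw [hQ0def]; simp only [if_neg h]; exact he _)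
      rw [sdiff_sdiff_cancel hRS] at hres
      rw [Nat.succ_sub_succ] at *
      exact hres
    · push_neg at hex
      exact phaseA v b c (2*c - 2*b) (le_refl _) (k+1) m T S P hP hST hcard hnn hb
        (fun j => by have := hex j; omega) (fun j => by linarith [he j]) (fun j _ => he j)


lemma trivial_partition (d : ℕ) (S : Finset ℕ) (hd : 0 < d) :
    ∃ P : Fin d → Finset ℕ, IsPartition P S := by
  refine ⟨fun j => if j = ⟨0, hd⟩ then S else ∅, ?_, ?_⟩
  · intro i j hij
    by_cases hi : i = ⟨0, hd⟩ <;> by_cases hj : j = ⟨0, hd⟩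
    · exact absurd (hi.trans hj.symm) hij
    · simp [hi, hj]
    · simp [hi, hj]
    · simp [hi, hj]
  · ext a
    simp only [Finset.mem_biUnion, Finset.mem_univ, true_and]
    constructor
    · rintro ⟨j, hj⟩
      by_cases h : j = ⟨0, hd⟩
      · rwa [if_pos h] at hj
      · rw [if_neg h] at hj; exact absurd hj (Finset.notMem_empty a)
    · intro ha
      exact ⟨⟨0, hd⟩, by rwa [if_pos rfl]⟩

lemma le_MMS (v : ℕ → ℝ) (d : ℕ) (S : Finset ℕ) (hd : 0 < d)
    (hnn : ∀ g ∈ S, 0 ≤ v g) (Q : Fin d → Finset ℕ) (hQ : IsPartition Q S)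
    (y : ℝ) (hy : ∀ j, y ≤ (Q j).sum v) : y ≤ MMS v d S := by
  haveI : Nonempty (Fin d) := ⟨⟨0, hd⟩⟩
  have hbdd : BddAbove {x : ℝ | ∃ P : Fin d → Finset ℕ, IsPartition P S ∧
      x = ⨅ j, (P j).sum v} := by
    refine ⟨S.sum v, ?_⟩
    rintro z ⟨P, hP, rfl⟩
    refine le_trans (ciInf_le (Finite.bddBelow_range _) ⟨0, hd⟩) ?_
    exact Finset.sum_le_sum_of_subset_of_nonneg (mem_part_subset hP _)
      (fun g hg _ => hnn g hg)
  refine le_trans (le_ciInf hy) ?_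
  exact le_csSup hbdd ⟨Q, hQ, rfl⟩

lemma MMS_exists_partition (v : ℕ → ℝ) (d : ℕ) (S : Finset ℕ) (hd : 0 < d)
    (ε : ℝ) (hε : 0 < ε) :
    ∃ P : Fin d → Finset ℕ, IsPartition P S ∧ ∀ j, MMS v d S - ε < (P j).sum v := by
  haveI : Nonempty (Fin d) := ⟨⟨0, hd⟩⟩
  obtain ⟨P0, hP0⟩ := trivial_partition d S hd
  have hne : {x : ℝ | ∃ P : Fin d → Finset ℕ, IsPartition P S ∧
      x = ⨅ j, (P j).sum v}.Nonempty := ⟨_, P0, hP0, rfl⟩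
  have hlt : MMS v d S - ε < MMS v d S := sub_lt_self _ hε
  obtain ⟨z, ⟨P, hP, rfl⟩, hz⟩ := exists_lt_of_lt_csSup hne hlt
  exact ⟨P, hP, fun j => lt_of_lt_of_le hz (ciInf_le (Finite.bddBelow_range _) j)⟩

/-- removing 2k goods each of value at most MMS/2 + x, together with k
agents, decreases the MMS value by at most 2x. -/
theorem remove_2k_goods_MMS_bound
    (M : Finset ℕ) (v : ℕ → ℝ) (hnn : ∀ g ∈ M, 0 ≤ v g)
    (n k : ℕ) (hkn : k < n) (x : ℝ) (hx : 0 ≤ x)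
    (S : Finset ℕ) (hSM : S ⊆ M) (hScard : S.card = 2*k)
    (hSv : ∀ g ∈ S, v g ≤ MMS v n M / 2 + x) :
    MMS v n M - 2*x ≤ MMS v (n - k) (M \ S) := by
  refine le_of_forall_pos_le_add fun ε hε => ?_
  set μ := MMS v n M with hμ
  obtain ⟨P, hP, hPge⟩ := MMS_exists_partition v n M (by omega) (ε/2) (by positivity)
  obtain ⟨Q, hQ, hQge⟩ := phaseB v (μ/2 + x) (μ - ε/2) (by linarith) k n hkn M S P hP
    hSM hScard hnn hSv (fun j => le_of_lt (hPge j))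
  have hmms : 2*(μ - ε/2) - 2*(μ/2 + x) ≤ MMS v (n - k) (M \ S) :=
    le_MMS v (n-k) (M \ S) (by omega)
      (fun g hg => hnn g (Finset.mem_sdiff.1 hg).1) Q hQ _ hQge
  linarith
end

section
/- Let δ ≥ 0, and let goods be indexed 1,…,m with an additive valuation v satisfying v(1) ≥ v(2) ≥ … ≥ v(m), m ≥ 2n, and suppose v is normalized for n agents, i.e., there is a partition (P_1,…,P_n) of {1,…,m} with v(P_j)=1 for every j. Suppose v(k) < 3/4 + δ for every good k, and suppose there exists t ∈ {1,…,n} with v(t) + v(2n−t+1) > 1. Then for every k ∈ {1,…,n}, v(k) + v(2n−k+1) > 1/2 − 2δ. -/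
open Finset

/-- for an agent in N², every initial bag B_k = {k, 2n−k+1}
has value more than 1/2 − 2δ. -/
theorem bag_lower_half
    (δ : ℝ) (hδ : 0 ≤ δ)
    (m n : ℕ) (hn : 1 ≤ n) (hm : 2*n ≤ m)
    (v : ℕ → ℝ) (hnn : ∀ k, 0 ≤ v k)
    (hord : ∀ j k : ℕ, 1 ≤ j → j ≤ k → k ≤ m → v k ≤ v j)
    (hnorm : ∃ P : Fin n → Finset ℕ,
      IsPartition P (Finset.Icc 1 m) ∧ ∀ j, (P j).sum v = 1)
    (hbound : ∀ k, 1 ≤ k → k ≤ m → v k < 3/4 + δ)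
    (ht : ∃ t, 1 ≤ t ∧ t ≤ n ∧ 1 < v t + v (2*n - t + 1)) :
    ∀ k, 1 ≤ k → k ≤ n → 1/2 - 2*δ < v k + v (2*n - k + 1) := by
  obtain ⟨t, ht1, htn, htv⟩ := ht
  intro k hk1 hkn
  have htm : t ≤ m := by omega
  have ht2 : 2*n - t + 1 ≤ m := by omega
  have hvt2 : v (2*n - t + 1) ≤ v t := hord t (2*n - t + 1) ht1 (by omega) ht2
  by_cases hkt : t ≤ k
  · -- v k ≥ v(2n-t+1), v(2n-k+1) ≥ v(2n-t+1), and v(2n-t+1) > 1/4 - δ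
    have h1 : v (2*n - t + 1) ≤ v k := hord k (2*n - t + 1) hk1 (by omega) ht2
    have h2 : v (2*n - t + 1) ≤ v (2*n - k + 1) :=
      hord (2*n - k + 1) (2*n - t + 1) (by omega) (by omega) ht2
    have hb : v t < 3/4 + δ := hbound t ht1 htm
    have : 1/4 - δ < v (2*n - t + 1) := by linarith
    linarith
  · -- k < t, so v k ≥ v t > 1/2
    have h1 : v t ≤ v k := hord k t hk1 (by omega) htm
    have hvt : 1/2 < v t := by linarith
    have := hnn (2*n - k + 1)
    linarith
end

section
/- Let δ ≥ 0, and let goods be indexed 1,…,m with an additive valuation v satisfying v(1) ≥ v(2) ≥ … ≥ v(m) (with the convention v(k)=0 for k > m), m ≥ 2n, and suppose v is normalized for n agents, i.e., there is a partition (P_1,…,P_n) of {1,…,m} with v(P_j)=1 for every j. Suppose v(j) < 3/4 + δ for every good j. Let ℓ ≥ 1 be an integer such that there exists k with ℓ ≤ k ≤ n and v(k) + v(2n−k+ℓ) > 1. Then ∑_{g = 2n+1}^{m} v(g) > ℓ·(1/4 − δ). -/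
/-
Goods `1, …, k` pairwise cannot share a bundle with any other good among `1, …, 2n - k + ℓ`: two
such goods are together worth more than `v k + v (2n - k + ℓ) > 1`, the value of a whole bundle.
Hence the `k` bundles holding the top `k` goods meet `{1, …, 2n}` only in that good, except for at
most `k - ℓ` of them, which can absorb the goods `2n - k + ℓ + 1, …, 2n`. So at least `ℓ` bundles
hold a single good of `{1, …, 2n}`, worth less than `3/4 + δ`, while every other bundle holds at
most `1` there. The first `2n` goods are therefore worth less than `n - ℓ (1/4 - δ)`, and the rest
of the total value `n` lies beyond them.
-/

open Finset

open Function

theorem eq_of_mem_of_one_lt_add_s16 {α : Type*} {s : Finset α} {v : α → ℝ} (hnn : ∀ g, 0 ≤ v g)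
    (hs : ∑ g ∈ s, v g ≤ 1) {x y : α} (hx : x ∈ s) (hy : y ∈ s) (hxy : 1 < v x + v y) :
    x = y := by
  by_contra hne
  linarith [add_le_sum (fun g _ ↦ hnn g) hx hy hne]

theorem sum_lt_card_sub_card_mul {ι : Type*} [Fintype ι] {f : ι → ℝ} {c : ℝ}
    {T : Finset ι} (hT : T.Nonempty) (hf : ∀ j, f j ≤ 1) (hTf : ∀ j ∈ T, f j < c) :
    ∑ j, f j < Fintype.card ι - #T * (1 - c) := by
  classical
  have hrest : ∑ j ∈ univ \ T, f j ≤ #(univ \ T) := by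
    simpa using sum_le_sum fun j (_ : j ∈ univ \ T) ↦ hf j
  have hT' : ∑ j ∈ T, f j < #T * c := by
    simpa using sum_lt_sum_of_nonempty hT hTf
  rw [← sum_sdiff (subset_univ T), card_sdiff_of_subset (subset_univ T), card_univ,
    Nat.cast_sub (card_le_univ T)] at *
  linarith

section Bundles

variable {ι α : Type*} [Fintype ι] [DecidableEq α] {P : ι → Finset α}

theorem card_le_card_filter_card_inter_eq_one_add_card_sdiff (hP : Pairwise (Disjoint on P))
    {X Y W : Finset α} (hXW : X ⊆ W) (hX : X ⊆ univ.biUnion P)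
    (hsep : ∀ j, ∀ x ∈ P j ∩ X, ∀ y ∈ P j ∩ Y, x = y) (hXY : X ⊆ Y) :
    #X ≤ #{j | #(P j ∩ W) = 1} + #(W \ Y) := by
  set S : Finset ι := {j | (P j ∩ X).Nonempty}
  have hXS : #X ≤ #S := by
    have hcover : X ⊆ S.biUnion fun j ↦ P j ∩ X := fun x hx ↦ by
      obtain ⟨j, -, hj⟩ := mem_biUnion.1 (hX hx)
      exact mem_biUnion.2 ⟨j, mem_filter.2 ⟨mem_univ j, x, mem_inter.2 ⟨hj, hx⟩⟩,
        mem_inter.2 ⟨hj, hx⟩⟩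
    calc #X ≤ #(S.biUnion fun j ↦ P j ∩ X) := card_le_card hcover
      _ ≤ #S * 1 := card_biUnion_le_card_mul _ _ _ fun j _ ↦ card_le_one.2 fun x hx y hy ↦
          hsep j x hx y (inter_subset_inter_left hXY hy)
      _ = #S := mul_one _
  have hcrowded : #{j ∈ S | ¬#(P j ∩ W) = 1} ≤ #(W \ Y) := by
    have hnonempty : ∀ j ∈ {j ∈ S | ¬#(P j ∩ W) = 1}, (P j ∩ (W \ Y)).Nonempty := by
      intro j hj
      obtain ⟨hjS, hcard⟩ := mem_filter.1 hj
      obtain ⟨x, hx⟩ := (mem_filter.1 hjS).2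
      have hxW : x ∈ P j ∩ W := inter_subset_inter_left hXW hx
      have hcard2 : 1 < #(P j ∩ W) := by have := card_pos.2 ⟨x, hxW⟩; omega
      obtain ⟨y, hy, hyx⟩ := exists_mem_ne hcard2 x
      refine ⟨y, mem_inter.2 ⟨(mem_inter.1 hy).1, mem_sdiff.2 ⟨(mem_inter.1 hy).2, fun hyY ↦ ?_⟩⟩⟩
      exact hyx (hsep j x hx y (mem_inter.2 ⟨(mem_inter.1 hy).1, hyY⟩)).symm
    calc _ ≤ #(({j ∈ S | ¬#(P j ∩ W) = 1} : Finset ι).biUnion fun j ↦ P j ∩ (W \ Y)) :=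
          card_le_card_biUnion (fun i _ j _ hij ↦ (hP hij).mono inter_subset_left inter_subset_left)
            hnonempty
      _ ≤ #(W \ Y) := card_le_card (biUnion_subset.2 fun _ _ ↦ inter_subset_right)
  calc #X ≤ #S := hXS
    _ = #{j ∈ S | #(P j ∩ W) = 1} + #{j ∈ S | ¬#(P j ∩ W) = 1} :=
        (card_filter_add_card_filter_not _).symm
    _ ≤ #{j | #(P j ∩ W) = 1} + #(W \ Y) :=
        add_le_add (card_le_card (filter_subset_filter _ (subset_univ S))) hcrowded

theorem sum_eq_sum_sum_inter (hP : Pairwise (Disjoint on P)) {W : Finset α}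
    (hW : W ⊆ univ.biUnion P) (f : α → ℝ) :
    ∑ g ∈ W, f g = ∑ j, ∑ g ∈ P j ∩ W, f g := by
  rw [← sum_biUnion fun i _ j _ hij ↦ (hP hij).mono inter_subset_left inter_subset_left,
    ← biUnion_inter, inter_eq_right.2 hW]

theorem sum_lt_card_sub_mul_of_le_card_filter_card_inter_eq_one (hP : Pairwise (Disjoint on P))
    {W : Finset α} (hW : W ⊆ univ.biUnion P) {v : α → ℝ} (hnn : ∀ g, 0 ≤ v g)
    (hP1 : ∀ j, ∑ g ∈ P j, v g ≤ 1) {c : ℝ} (hc : ∀ g ∈ W, v g < c) {ℓ : ℕ} (hℓ : 1 ≤ ℓ)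
    (hlonely : ℓ ≤ #{j | #(P j ∩ W) = 1}) :
    ∑ g ∈ W, v g < Fintype.card ι - ℓ * (1 - c) := by
  obtain ⟨T, hT, rfl⟩ := exists_subset_card_eq hlonely
  have hbundle : ∀ j, ∑ g ∈ P j ∩ W, v g ≤ 1 := fun j ↦
    (sum_le_sum_of_subset_of_nonneg inter_subset_left fun g _ _ ↦ hnn g).trans (hP1 j)
  have hsingle : ∀ j ∈ T, ∑ g ∈ P j ∩ W, v g < c := by
    intro j hj
    obtain ⟨g, hg⟩ := card_eq_one.1 (mem_filter.1 (hT hj)).2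
    rw [hg, sum_singleton]
    exact hc g (mem_of_mem_inter_right (hg ▸ mem_singleton_self g))
  rw [sum_eq_sum_sum_inter hP hW]
  exact sum_lt_card_sub_card_mul (card_pos.1 hℓ) hbundle hsingle

end Bundles

theorem small_goods_total_value_general
    (δ : ℝ)
    (m n : ℕ) (hm : 2*n ≤ m)
    (v : ℕ → ℝ) (hnn : ∀ k, 0 ≤ v k)
    (hord : ∀ j k : ℕ, 1 ≤ j → j ≤ k → k ≤ m → v k ≤ v j)
    (hnorm : ∃ P : Fin n → Finset ℕ,
      IsPartition P (Finset.Icc 1 m) ∧ ∀ j, (P j).sum v = 1)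
    (hbound : ∀ k, 1 ≤ k → k ≤ m → v k < 3/4 + δ)
    (ℓ : ℕ) (hℓ : 1 ≤ ℓ)
    (hshift : ∃ k, ℓ ≤ k ∧ k ≤ n ∧ 1 < v k + v (2*n - k + ℓ)) :
    (ℓ : ℝ) * (1/4 - δ) < ∑ g ∈ Finset.Icc (2*n + 1) m, v g := by
  obtain ⟨P, ⟨hdisj, hcover⟩, hsum⟩ := hnorm
  obtain ⟨k, hlk, hkn, hks⟩ := hshift
  have hsep : ∀ j, ∀ x ∈ P j ∩ Icc 1 k, ∀ y ∈ P j ∩ Icc 1 (2*n - k + ℓ), x = y := by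
    intro j x hx y hy
    simp only [mem_inter, mem_Icc] at hx hy
    refine eq_of_mem_of_one_lt_add_s16 hnn (hsum j).le hx.1 hy.1 ?_
    linarith [hord x k hx.2.1 hx.2.2 (by omega), hord y _ hy.2.1 hy.2.2 (by omega)]
  have hW : Icc 1 (2*n) ⊆ univ.biUnion P := hcover ▸ Icc_subset_Icc_right hm
  have hlonely : ℓ ≤ #{j | #(P j ∩ Icc 1 (2*n)) = 1} := by
    have hkW : Icc 1 k ⊆ Icc 1 (2*n) := Icc_subset_Icc_right (by omega)
    have hYW : Icc 1 (2*n - k + ℓ) ⊆ Icc 1 (2*n) := Icc_subset_Icc_right (by omega)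
    have := card_le_card_filter_card_inter_eq_one_add_card_sdiff hdisj hkW (hkW.trans hW) hsep
      (Icc_subset_Icc_right (by omega))
    rw [card_sdiff_of_subset hYW] at this
    simp only [Nat.card_Icc] at this
    omega
  have hfirst := sum_lt_card_sub_mul_of_le_card_filter_card_inter_eq_one hdisj hW hnn
    (fun j ↦ (hsum j).le) (fun g hg ↦ hbound g (mem_Icc.1 hg).1 ((mem_Icc.1 hg).2.trans hm)) hℓ
    hlonely
  have htotal : ∑ g ∈ Icc 1 m, v g = n := by
    rw [← hcover, sum_biUnion fun i _ j _ hij ↦ hdisj i j hij]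
    simp [hsum]
  have hsplit := sum_Ioc_consecutive v (Nat.zero_le (2*n)) hm
  simp only [← Icc_add_one_left_eq_Ioc, zero_add] at hsplit
  rw [Fintype.card_fin] at hfirst
  linarith

/-- lower bound on the total value of the goods beyond the first 2n. -/
theorem small_goods_total_value
    (δ : ℝ) (hδ : 0 ≤ δ)
    (m n : ℕ) (hn : 1 ≤ n) (hm : 2*n ≤ m)
    (v : ℕ → ℝ) (hnn : ∀ k, 0 ≤ v k) (hzero : ∀ k, m < k → v k = 0)
    (hord : ∀ j k : ℕ, 1 ≤ j → j ≤ k → k ≤ m → v k ≤ v j)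
    (hnorm : ∃ P : Fin n → Finset ℕ,
      IsPartition P (Finset.Icc 1 m) ∧ ∀ j, (P j).sum v = 1)
    (hbound : ∀ k, 1 ≤ k → k ≤ m → v k < 3/4 + δ)
    (ℓ : ℕ) (hℓ : 1 ≤ ℓ)
    (hshift : ∃ k, ℓ ≤ k ∧ k ≤ n ∧ 1 < v k + v (2*n - k + ℓ)) :
    (ℓ : ℝ) * (1/4 - δ) < ∑ g ∈ Finset.Icc (2*n + 1) m, v g :=
  small_goods_total_value_general δ m n hm v hnn hord hnorm hbound ℓ hℓ hshift
end
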